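/- arXiv:2510.08501 — 5 statements merged into one kernel-verified Lean document; each statement's English description precedes it below -/
import Mathlib

section
/- Fix α ∈ (0,1). For each N, let N_A = ⌊αN⌋ (respectively N_A = ⌈αN⌉), let N_B = N − N_A, restrict to those N for which N_B is even, and let p_s(N) denote the solvability probability for the uniform graph ensemble on N vertices with a bipartition into a set A of size N_A and a set B of size N_B. Then: (1) if α < 1/2 (with N_A = ⌊αN⌋), p_s(N) → 0 as N → ∞; (2) if α > 1/2 (with N_A = ⌈αN⌉), p_s(N) → 1 as N → ∞. -/
noncomputable section
open scoped BigOperators Classical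

/-- The matrix equation `Γ_BA x = D` over `𝔽₂` associated to a graph `G` and a
bipartition `(A, B)` has a solution: here `(Γ_BA)_{b a} = 1` iff `{a, b}` is an edge,
and `D_b = 1` iff `b` has even degree in the subgraph induced by `B`. -/
def MatrixEqSolvable {N : ℕ} (G : SimpleGraph (Fin N)) (A B : Finset (Fin N)) : Prop :=
  ∃ x : Fin N → ZMod 2, ∀ b ∈ B,
    (∑ a ∈ A, (if G.Adj b a then (1 : ZMod 2) else 0) * x a) =
      (if Even ((B.filter fun b' => G.Adj b b').card) then 1 else 0)

/-- The probability, over a uniformly random simple graph on `Fin N` (equivalently,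
each possible edge included independently with probability 1/2), that the matrix
equation `Γ_BA x = D` is solvable. -/
def psUnif {N : ℕ} (A B : Finset (Fin N)) : ℝ :=
  ((Finset.univ.filter fun G : SimpleGraph (Fin N) => MatrixEqSolvable G A B).card : ℝ) /
    (Fintype.card (SimpleGraph (Fin N)) : ℝ)

abbrev ET (N : ℕ) := {e : Sym2 (Fin N) // ¬ e.IsDiag}

lemma zmod2_cases (x : ZMod 2) : x = 0 ∨ x = 1 := by fin_cases x; exacts [Or.inl rfl, Or.inr rfl]

def graphEquiv (N : ℕ) : SimpleGraph (Fin N) ≃ (ET N → ZMod 2) where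
  toFun G e := if e.1 ∈ G.edgeSet then 1 else 0
  invFun f := SimpleGraph.fromEdgeSet {e | ∃ h : ¬ e.IsDiag, f ⟨e, h⟩ = 1}
  left_inv G := by
    ext a b
    simp only [SimpleGraph.fromEdgeSet_adj, Set.mem_setOf_eq]
    constructor
    · rintro ⟨⟨h, hf⟩, hne⟩
      by_contra hadj
      rw [if_neg (by simpa [SimpleGraph.mem_edgeSet] using hadj)] at hf
      exact one_ne_zero hf.symm
    · intro h
      exact ⟨⟨by simp [h.ne], by simp [SimpleGraph.mem_edgeSet, h]⟩, h.ne⟩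
  right_inv f := by
    funext e
    obtain ⟨e, he⟩ := e
    induction e using Sym2.ind with
    | _ a b =>
      have hne : a ≠ b := by simpa using he
      dsimp only
      by_cases hf : f ⟨s(a, b), he⟩ = 1
      · rw [if_pos]
        · exact hf.symm
        · rw [SimpleGraph.edgeSet_fromEdgeSet]
          exact ⟨⟨he, hf⟩, he⟩
      · rw [if_neg]
        · rcases zmod2_cases (f ⟨s(a, b), he⟩) with h0 | h1
          · exact h0.symm
          · exact absurd h1 hf
        · rw [SimpleGraph.edgeSet_fromEdgeSet]
          rintro ⟨⟨h', hf'⟩, -⟩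
          exact hf hf'

/-- total edge-valuation of a function on edges -/
def fV {N : ℕ} (f : ET N → ZMod 2) : Sym2 (Fin N) → ZMod 2 :=
  fun e => if h : ¬ e.IsDiag then f ⟨e, h⟩ else 0

lemma adj_indicator {N : ℕ} (f : ET N → ZMod 2) (x y : Fin N) :
    (if ((graphEquiv N).symm f).Adj x y then (1 : ZMod 2) else 0) = fV f s(x, y) := by
  by_cases hxy : x = y
  · subst hxy
    rw [if_neg (SimpleGraph.irrefl _)]
    unfold fV
    rw [dif_neg (by simp)]
  · have hd : ¬ (s(x,y) : Sym2 (Fin N)).IsDiag := by simpa using hxy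
    have hadj : ((graphEquiv N).symm f).Adj x y ↔ f ⟨s(x,y), hd⟩ = 1 := by
      show (SimpleGraph.fromEdgeSet _).Adj x y ↔ _
      rw [SimpleGraph.fromEdgeSet_adj]
      simp only [Set.mem_setOf_eq]
      constructor
      · rintro ⟨⟨h', hf⟩, -⟩
        exact hf
      · intro hf
        exact ⟨⟨hd, hf⟩, hxy⟩
    unfold fV
    rw [dif_pos hd]
    rcases zmod2_cases (f ⟨s(x,y), hd⟩) with h0 | h1
    · rw [if_neg, h0]
      rw [hadj, h0]
      exact zero_ne_one
    · rw [if_pos (hadj.mpr h1), h1]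

variable {N : ℕ}

/-- the predicate "edge lies inside B" -/
def EBp (B : Finset (Fin N)) (e : ET N) : Prop := ∀ x ∈ (e : Sym2 (Fin N)), x ∈ B

def splitE (B : Finset (Fin N)) :
    (ET N → ZMod 2) ≃ ({e : ET N // EBp B e} → ZMod 2) × ({e : ET N // ¬ EBp B e} → ZMod 2) :=
  Equiv.piEquivPiSubtypeProd (EBp B) (fun _ => ZMod 2)

def hV (B : Finset (Fin N)) (h : {e : ET N // EBp B e} → ZMod 2) : Sym2 (Fin N) → ZMod 2 :=
  fun e => if hd : ¬ e.IsDiag then (if hb : EBp B ⟨e, hd⟩ then h ⟨⟨e, hd⟩, hb⟩ else 0) else 0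

def gV (B : Finset (Fin N)) (g : {e : ET N // ¬ EBp B e} → ZMod 2) : Sym2 (Fin N) → ZMod 2 :=
  fun e => if hd : ¬ e.IsDiag then (if hb : ¬ EBp B ⟨e, hd⟩ then g ⟨⟨e, hd⟩, hb⟩ else 0) else 0

lemma fV_split (B : Finset (Fin N)) (h : {e : ET N // EBp B e} → ZMod 2)
    (g : {e : ET N // ¬ EBp B e} → ZMod 2) (e : Sym2 (Fin N)) :
    fV ((splitE B).symm (h, g)) e = hV B h e + gV B g e := by
  unfold fV hV gV splitE
  by_cases hd : ¬ e.IsDiag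
  · rw [dif_pos hd, dif_pos hd, dif_pos hd]
    show (if hb : EBp B ⟨e, hd⟩ then h ⟨⟨e, hd⟩, hb⟩ else g ⟨⟨e, hd⟩, hb⟩) = _
    by_cases hb : EBp B ⟨e, hd⟩
    · rw [dif_pos hb, dif_pos hb, dif_neg (by exact fun h' => h' hb), add_zero]
    · rw [dif_neg hb, dif_neg hb, dif_pos hb, zero_add]
  · rw [dif_neg hd, dif_neg hd, dif_neg hd, add_zero]

/-- parity-of-degree data -/
def Lam (B : Finset (Fin N)) (h : {e : ET N // EBp B e} → ZMod 2) : Fin N → ZMod 2 :=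
  fun x => ∑ y ∈ B, hV B h s(x, y)

lemma gV_vanish (B : Finset (Fin N)) (g) (x y : Fin N) (hx : x ∈ B) (hy : y ∈ B) :
    gV B g s(x, y) = 0 := by
  unfold gV
  by_cases hd : ¬ (s(x,y) : Sym2 (Fin N)).IsDiag
  · rw [dif_pos hd, dif_neg]
    intro hb
    exact hb (by intro z hz; rcases Sym2.mem_iff.mp hz with rfl | rfl <;> assumption)
  · rw [dif_neg hd]

lemma hV_vanish (B : Finset (Fin N)) (h) (x y : Fin N) (hy : y ∉ B) :
    hV B h s(x, y) = 0 := by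
  unfold hV
  by_cases hd : ¬ (s(x,y) : Sym2 (Fin N)).IsDiag
  · rw [dif_pos hd, dif_neg]
    intro hb
    exact hy (hb y (by simp))
  · rw [dif_neg hd]

lemma solv_iff (A B : Finset (Fin N)) (hdisj : Disjoint A B)
    (h : {e : ET N // EBp B e} → ZMod 2) (g : {e : ET N // ¬ EBp B e} → ZMod 2) :
    MatrixEqSolvable ((graphEquiv N).symm ((splitE B).symm (h, g))) A B ↔
      ∃ x : Fin N → ZMod 2, ∀ b ∈ B, (∑ a ∈ A, gV B g s(b, a) * x a) = Lam B h b + 1 := by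
  unfold MatrixEqSolvable
  apply exists_congr
  intro x
  apply forall₂_congr
  intro b hb
  have L1 : (∑ a ∈ A, (if ((graphEquiv N).symm ((splitE B).symm (h, g))).Adj b a then (1:ZMod 2) else 0) * x a)
      = ∑ a ∈ A, gV B g s(b, a) * x a := by
    refine Finset.sum_congr rfl fun a ha => ?_
    rw [adj_indicator, fV_split, hV_vanish B h b a (Finset.disjoint_left.mp hdisj ha), zero_add]
  have hcard : ((B.filter fun b' => ((graphEquiv N).symm ((splitE B).symm (h, g))).Adj b b').card : ZMod 2)
      = Lam B h b := by
    rw [Finset.card_filter]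
    push_cast
    refine Finset.sum_congr rfl fun b' hb' => ?_
    rw [adj_indicator, fV_split, gV_vanish B g b b' hb hb', add_zero]
  have key : (if Even ((B.filter fun b' => ((graphEquiv N).symm ((splitE B).symm (h, g))).Adj b b').card) then (1:ZMod 2) else 0) = Lam B h b + 1 := by
    split_ifs with hev
    · rw [← hcard, (ZMod.natCast_eq_zero_iff _ _).mpr hev.two_dvd, zero_add]
    · rcases zmod2_cases (Lam B h b) with h0 | h1
      · exfalso
        rw [← hcard, ZMod.natCast_eq_zero_iff] at h0
        exact hev (even_iff_two_dvd.mpr h0)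
      · rw [h1]; decide
  rw [L1, key]

-- stage 3 starts here
lemma hV_add (B : Finset (Fin N)) (h₁ h₂) (e : Sym2 (Fin N)) :
    hV B (h₁ + h₂) e = hV B h₁ e + hV B h₂ e := by
  unfold hV
  by_cases hd : ¬ e.IsDiag
  · rw [dif_pos hd, dif_pos hd, dif_pos hd]
    by_cases hb : EBp B ⟨e, hd⟩
    · rw [dif_pos hb, dif_pos hb, dif_pos hb]; rfl
    · rw [dif_neg hb, dif_neg hb, dif_neg hb, add_zero]
  · rw [dif_neg hd, dif_neg hd, dif_neg hd, add_zero]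

lemma hV_smul (B : Finset (Fin N)) (c : ZMod 2) (h) (e : Sym2 (Fin N)) :
    hV B (c • h) e = c * hV B h e := by
  unfold hV
  by_cases hd : ¬ e.IsDiag
  · rw [dif_pos hd, dif_pos hd]
    by_cases hb : EBp B ⟨e, hd⟩
    · rw [dif_pos hb, dif_pos hb]; rfl
    · rw [dif_neg hb, dif_neg hb, mul_zero]
  · rw [dif_neg hd, dif_neg hd, mul_zero]

/-- the degree-parity linear map -/
def LamL (B : Finset (Fin N)) : ({e : ET N // EBp B e} → ZMod 2) →ₗ[ZMod 2] ({b : Fin N // b ∈ B} → ZMod 2) where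
  toFun h := fun b => Lam B h b.1
  map_add' h₁ h₂ := by
    funext b
    show Lam B (h₁ + h₂) b.1 = Lam B h₁ b.1 + Lam B h₂ b.1
    unfold Lam
    rw [← Finset.sum_add_distrib]
    exact Finset.sum_congr rfl fun y _ => hV_add B h₁ h₂ _
  map_smul' c h := by
    funext b
    show Lam B (c • h) b.1 = c * Lam B h b.1
    unfold Lam
    rw [Finset.mul_sum]
    exact Finset.sum_congr rfl fun y _ => hV_smul B c h _

/-- the single edge function -/
def chiE (B : Finset (Fin N)) (c d : Fin N) (hcd : c ≠ d) (hc : c ∈ B) (hd : d ∈ B) :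
    {e : ET N // EBp B e} → ZMod 2 :=
  fun e' => if e' = ⟨⟨s(c,d), by simpa using hcd⟩, by
    intro z hz; rcases Sym2.mem_iff.mp hz with rfl | rfl <;> assumption⟩ then 1 else 0

lemma hV_chiE (B : Finset (Fin N)) (c d : Fin N) (hcd : c ≠ d) (hc : c ∈ B) (hd : d ∈ B)
    (e : Sym2 (Fin N)) :
    hV B (chiE B c d hcd hc hd) e = if e = s(c,d) then 1 else 0 := by
  by_cases he : e = s(c,d)
  · subst he
    rw [if_pos rfl]
    unfold hV chiE
    rw [dif_pos (by simpa using hcd), dif_pos (by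
      intro z hz; rcases Sym2.mem_iff.mp hz with rfl | rfl <;> assumption), if_pos rfl]
  · rw [if_neg he]
    unfold hV chiE
    by_cases hdg : ¬ e.IsDiag
    · rw [dif_pos hdg]
      by_cases hb : EBp B ⟨e, hdg⟩
      · rw [dif_pos hb, if_neg]
        intro hEq
        apply he
        exact congrArg (fun z => z.1.1) hEq
      · rw [dif_neg hb]
    · rw [dif_neg hdg]

lemma lam_chiE (B : Finset (Fin N)) (c d : Fin N) (hcd : c ≠ d) (hc : c ∈ B) (hd : d ∈ B)
    (x : Fin N) :
    Lam B (chiE B c d hcd hc hd) x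
      = (if x = c then 1 else 0) + (if x = d then 1 else 0) := by
  unfold Lam
  have key : ∀ y ∈ B, hV B (chiE B c d hcd hc hd) s(x,y)
      = if (x = c ∧ y = d) ∨ (x = d ∧ y = c) then 1 else 0 := by
    intro y _
    rw [hV_chiE]
    congr 1
    simp [Sym2.eq_iff]
  rw [Finset.sum_congr rfl key]
  by_cases hxc : x = c
  · have hxd : x ≠ d := fun h => hcd (hxc ▸ h)
    have h1 : ∀ y ∈ B, (if (x = c ∧ y = d) ∨ (x = d ∧ y = c) then (1 : ZMod 2) else 0)
        = if y = d then 1 else 0 := by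
      intro y _
      congr 1
      simp only [eq_iff_iff]
      constructor
      · rintro (⟨-, h⟩ | ⟨h, -⟩)
        · exact h
        · exact absurd h hxd
      · intro h; exact Or.inl ⟨hxc, h⟩
    rw [Finset.sum_congr rfl h1, if_pos hxc, if_neg hxd,
      Finset.sum_ite_eq' B d (fun _ => (1 : ZMod 2)), if_pos hd, add_zero]
  · by_cases hxd : x = d
    · have h1 : ∀ y ∈ B, (if (x = c ∧ y = d) ∨ (x = d ∧ y = c) then (1 : ZMod 2) else 0)
          = if y = c then 1 else 0 := by
        intro y _
        congr 1
        simp only [eq_iff_iff]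
        constructor
        · rintro (⟨h, -⟩ | ⟨-, h⟩)
          · exact absurd h hxc
          · exact h
        · intro h; exact Or.inr ⟨hxd, h⟩
      rw [Finset.sum_congr rfl h1, if_neg hxc, if_pos hxd,
        Finset.sum_ite_eq' B c (fun _ => (1 : ZMod 2)), if_pos hc, zero_add]
    · rw [if_neg hxc, if_neg hxd, add_zero]
      rw [Finset.sum_eq_zero]
      intro y _
      rw [if_neg]
      rintro (⟨h, -⟩ | ⟨h, -⟩)
      · exact hxc h
      · exact hxd h

lemma zmod2_aij : ∀ a i j : ZMod 2, a + i + j + (i + j) = a := by decide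

lemma reach (B : Finset (Fin N)) :
    ∀ n : ℕ, ∀ v : {b : Fin N // b ∈ B} → ZMod 2,
      (Finset.univ.filter fun b => v b = 1).card = n → (∑ b, v b) = 0 →
      ∃ h, LamL B h = v := by
  intro n
  induction n using Nat.strong_induction_on with
  | _ n IH =>
    intro v hn hsum
    rcases Nat.eq_zero_or_pos n with h0 | hpos
    · subst h0
      have hv : v = 0 := by
        funext b
        rcases zmod2_cases (v b) with h | h
        · exact h
        · exfalso
          have hmem : b ∈ Finset.univ.filter fun b => v b = 1 := by
            simp only [Finset.mem_filter, Finset.mem_univ, true_and]; exact h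
          rw [Finset.card_eq_zero.mp hn] at hmem
          simp at hmem
      exact ⟨0, by rw [map_zero, hv]⟩
    · set S := Finset.univ.filter (fun b : {b : Fin N // b ∈ B} => v b = 1) with hS
      have hSsum : ∑ b ∈ S, v b = 0 := by
        rw [Finset.sum_subset (Finset.subset_univ S)]
        · exact hsum
        · intro x _ hx
          rcases zmod2_cases (v x) with h | h
          · exact h
          · exact absurd (by simp only [hS, Finset.mem_filter, Finset.mem_univ, true_and]; exact h) hx
      have hcast : ((n : ℕ) : ZMod 2) = 0 := by
        rw [← hn, ← hSsum]
        rw [Finset.sum_congr rfl (fun b hb => (Finset.mem_filter.mp hb).2), Finset.sum_const,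
          nsmul_eq_mul, mul_one]
      have hdvd : 2 ∣ n := (ZMod.natCast_eq_zero_iff _ _).mp hcast
      have hn2 : 2 ≤ n := Nat.le_of_dvd hpos hdvd
      have hScard : S.card = n := hn
      have hSne : S.Nonempty := Finset.card_pos.mp (by rw [hScard]; omega)
      obtain ⟨c, hcS⟩ := hSne
      have hec : (S.erase c).Nonempty := Finset.card_pos.mp (by
        rw [Finset.card_erase_of_mem hcS, hScard]; omega)
      obtain ⟨d, hdS'⟩ := hec
      have hdc : d ≠ c := (Finset.mem_erase.mp hdS').1
      have hdS : d ∈ S := (Finset.mem_erase.mp hdS').2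
      have hvc : v c = 1 := (Finset.mem_filter.mp hcS).2
      have hvd : v d = 1 := (Finset.mem_filter.mp hdS).2
      set w : {b : Fin N // b ∈ B} → ZMod 2 :=
        fun b => v b + (if b = c then 1 else 0) + (if b = d then 1 else 0) with hw
      have hcd' : c ≠ d := fun h => hdc h.symm
      have hwc : w c = 0 := by
        simp only [hw, hvc, if_true]; rw [if_neg hcd']; decide
      have hwd : w d = 0 := by
        simp only [hw, hvd, if_true]; rw [if_neg hdc]; decide
      have hwo : ∀ b, b ≠ c → b ≠ d → w b = v b := by
        intro b h1 h2
        simp only [hw]; simp only [if_neg h1, if_neg h2, add_zero]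
      have hfw : (Finset.univ.filter fun b => w b = 1) = (S.erase c).erase d := by
        ext b
        simp only [Finset.mem_filter, Finset.mem_univ, true_and, Finset.mem_erase, hS]
        by_cases h1 : b = c
        · subst h1
          rw [hwc]
          constructor
          · intro h; exact absurd h.symm one_ne_zero
          · rintro ⟨-, h, -⟩; exact absurd rfl h
        · by_cases h2 : b = d
          · subst h2
            rw [hwd]
            constructor
            · intro h; exact absurd h.symm one_ne_zero
            · rintro ⟨h, -⟩; exact absurd rfl h
          · rw [hwo b h1 h2]
            constructor
            · intro h; exact ⟨h2, h1, h⟩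
            · rintro ⟨-, -, h⟩; exact h
      have hwsum : ∑ b, w b = 0 := by
        simp only [hw]
        rw [Finset.sum_add_distrib, Finset.sum_add_distrib, hsum,
          Finset.sum_ite_eq' Finset.univ c (fun _ => (1 : ZMod 2)),
          Finset.sum_ite_eq' Finset.univ d (fun _ => (1 : ZMod 2)),
          if_pos (Finset.mem_univ c), if_pos (Finset.mem_univ d)]
        decide
      have hwcard : (Finset.univ.filter fun b => w b = 1).card = n - 2 := by
        rw [hfw, Finset.card_erase_of_mem hdS', Finset.card_erase_of_mem hcS, hScard]
        omega
      obtain ⟨h', hh'⟩ := IH (n - 2) (by omega) w hwcard hwsum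
      have hcd1 : (c : Fin N) ≠ (d : Fin N) := fun h => hdc (Subtype.ext h.symm)
      refine ⟨h' + chiE B c.1 d.1 hcd1 c.2 d.2, ?_⟩
      rw [map_add, hh']
      funext b
      show w b + Lam B (chiE B c.1 d.1 hcd1 c.2 d.2) b.1 = v b
      rw [lam_chiE]
      have e1 : (if (b : Fin N) = (c : Fin N) then (1 : ZMod 2) else 0) = (if b = c then 1 else 0) := by
        congr 1
        exact propext Subtype.ext_iff.symm
      have e2 : (if (b : Fin N) = (d : Fin N) then (1 : ZMod 2) else 0) = (if b = d then 1 else 0) := by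
        congr 1
        exact propext Subtype.ext_iff.symm
      rw [e1, e2]
      simp only [hw]
      exact zmod2_aij _ _ _

lemma fiber_bound (B : Finset (Fin N)) (w : {b : Fin N // b ∈ B} → ZMod 2) :
    (Finset.univ.filter fun h : {e : ET N // EBp B e} → ZMod 2 => LamL B h = w).card
        * 2 ^ (B.card - 1)
      ≤ Fintype.card ({e : ET N // EBp B e} → ZMod 2) := by
  rcases B.eq_empty_or_nonempty with hB | hB
  · subst hB
    simp only [Finset.card_empty, Nat.zero_sub, pow_zero, mul_one]
    exact le_of_le_of_eq (Finset.card_filter_le _ _) (Finset.card_univ)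
  · by_cases hne : ∃ h0, LamL B h0 = w
    · obtain ⟨h0, hh0⟩ := hne
      -- fiber card ≤ card of kernel
      have e1 : (Finset.univ.filter fun h => LamL B h = w).card
          = Fintype.card {h : {e : ET N // EBp B e} → ZMod 2 // LamL B h = w} :=
        (Fintype.card_subtype _).symm
      have hle1 : Fintype.card {h : {e : ET N // EBp B e} → ZMod 2 // LamL B h = w}
          ≤ Fintype.card (LinearMap.ker (LamL B)) := by
        apply Fintype.card_le_of_injective
          (fun p => (⟨p.1 - h0, by
            rw [LinearMap.mem_ker, map_sub, p.2, hh0, sub_self]⟩ : LinearMap.ker (LamL B)))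
        rintro ⟨h1, p1⟩ ⟨h2, p2⟩ hEq
        simp only [Subtype.mk.injEq] at hEq ⊢
        have := congrArg (fun z => z + h0) hEq
        simpa using this
      -- range card ≥ 2 ^ (B.card - 1)
      obtain ⟨b0v, hb0v⟩ := hB
      set b0 : {b : Fin N // b ∈ B} := ⟨b0v, hb0v⟩ with hb0
      have hrange : 2 ^ (B.card - 1) ≤ Fintype.card (LinearMap.range (LamL B)) := by
        have hinj : Function.Injective
            (fun w' : {x : {b : Fin N // b ∈ B} // x ≠ b0} → ZMod 2 =>
              (⟨(fun b => if hb : b = b0 then ∑ x : {x // x ≠ b0}, w' x else w' ⟨b, hb⟩), by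
                set v : {b : Fin N // b ∈ B} → ZMod 2 :=
                  fun b => if hb : b = b0 then ∑ x : {x // x ≠ b0}, w' x else w' ⟨b, hb⟩ with hv
                have hrest : ∑ b ∈ Finset.univ.erase b0, v b
                    = ∑ x : {x : {b : Fin N // b ∈ B} // x ≠ b0}, w' x := by
                  rw [Finset.sum_subtype (p := fun x => x ≠ b0) (Finset.univ.erase b0)
                    (fun x => by simp [Finset.mem_erase]) v]
                  refine Fintype.sum_congr _ _ fun x => ?_
                  simp only [hv]
                  rw [dif_neg x.2]
                have hvb0 : v b0 = ∑ x : {x : {b : Fin N // b ∈ B} // x ≠ b0}, w' x := by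
                  simp only [hv]; simp
                have hsum : ∑ b, v b = 0 := by
                  rw [← Finset.add_sum_erase Finset.univ v (Finset.mem_univ b0), hrest, hvb0]
                  have h2 : ∀ y : ZMod 2, y + y = 0 := by decide
                  exact h2 _
                obtain ⟨h, hh⟩ := reach B _ v rfl hsum
                exact ⟨h, hh⟩⟩ : LinearMap.range (LamL B)))
          := by
          intro w1 w2 hEq
          have hfun := congrArg Subtype.val hEq
          funext x
          have hx := congrFun hfun x.1
          simp only at hx
          rw [dif_neg x.2, dif_neg x.2] at hx
          simpa using hx
        calc 2 ^ (B.card - 1)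
            = Fintype.card ({x : {b : Fin N // b ∈ B} // x ≠ b0} → ZMod 2) := by
              rw [Fintype.card_fun, ZMod.card]
              congr 1
              rw [Fintype.card_subtype]
              have : (Finset.univ.filter fun x : {b : Fin N // b ∈ B} => x ≠ b0)
                  = Finset.univ.erase b0 := by
                ext x; simp [Finset.mem_erase, and_comm]
              rw [this, Finset.card_erase_of_mem (Finset.mem_univ b0), Finset.card_univ,
                Fintype.card_coe]
          _ ≤ _ := Fintype.card_le_of_injective _ hinj
      -- first isomorphism theorem
      have hquot : Nat.card (({e : ET N // EBp B e} → ZMod 2) ⧸ LinearMap.ker (LamL B))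
          = Nat.card (LinearMap.range (LamL B)) :=
        Nat.card_congr (LamL B).quotKerEquivRange.toEquiv
      have hdom : Fintype.card ({e : ET N // EBp B e} → ZMod 2)
          = Fintype.card (LinearMap.ker (LamL B)) * Fintype.card (LinearMap.range (LamL B)) := by
        rw [← Nat.card_eq_fintype_card, ← Nat.card_eq_fintype_card, ← Nat.card_eq_fintype_card,
          ← hquot]
        exact Submodule.card_eq_card_quotient_mul_card _
      rw [e1, hdom]
      exact Nat.mul_le_mul hle1 hrange
    · rw [Finset.filter_false_of_mem, Finset.card_empty, zero_mul]
      · exact Nat.zero_le _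
      · intro h _ hEq
        exact hne ⟨h, hEq⟩

lemma card_filter_equiv {α β : Type*} [Fintype α] [Fintype β] (e : α ≃ β) (P : α → Prop) :
    (Finset.univ.filter P).card = (Finset.univ.filter fun b => P (e.symm b)).card := by
  rw [← Fintype.card_subtype, ← Fintype.card_subtype]
  exact Fintype.card_congr (e.subtypeEquiv (fun a => by rw [Equiv.symm_apply_apply]))

lemma card_filter_prod {γ δ : Type*} [Fintype γ] [Fintype δ] (P : γ × δ → Prop) :
    (Finset.univ.filter P).card
      = ∑ g : δ, (Finset.univ.filter fun h => P (h, g)).card := by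
  rw [Finset.card_eq_sum_card_fiberwise
    (f := Prod.snd) (t := Finset.univ) (fun x _ => Finset.mem_univ _)]
  refine Finset.sum_congr rfl fun g _ => ?_
  apply Finset.card_bij (fun p _ => p.1)
  · rintro ⟨h, g'⟩ hp
    simp only [Finset.mem_filter, Finset.mem_univ, true_and] at hp ⊢
    obtain ⟨hP, rfl⟩ := hp
    exact hP
  · rintro ⟨h1, g1⟩ hp1 ⟨h2, g2⟩ hp2 hEq
    simp only [Finset.mem_filter] at hp1 hp2
    obtain ⟨-, -, rfl⟩ := hp1
    obtain ⟨-, -, rfl⟩ := hp2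
    simpa [Prod.ext_iff] using hEq
  · intro h hh
    simp only [Finset.mem_filter, Finset.mem_univ, true_and] at hh
    exact ⟨(h, g), by simp [hh], rfl⟩

/-- the pair-level solvability predicate -/
def SolvPair (A B : Finset (Fin N)) (h : {e : ET N // EBp B e} → ZMod 2)
    (g : {e : ET N // ¬ EBp B e} → ZMod 2) : Prop :=
  ∃ x : Fin N → ZMod 2, ∀ b ∈ B, (∑ a ∈ A, gV B g s(b, a) * x a) = Lam B h b + 1

/-- the set of achievable left-hand sides -/
def Tset (A B : Finset (Fin N)) (g : {e : ET N // ¬ EBp B e} → ZMod 2) :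
    Finset ({b : Fin N // b ∈ B} → ZMod 2) :=
  Finset.image (fun y : {a : Fin N // a ∈ A} → ZMod 2 =>
    fun b : {b : Fin N // b ∈ B} => ∑ a ∈ A.attach, gV B g s(b.1, a.1) * y a) Finset.univ

lemma solvPair_iff_mem (A B : Finset (Fin N)) (h) (g) :
    SolvPair A B h g ↔ (fun b : {b : Fin N // b ∈ B} => Lam B h b.1 + 1) ∈ Tset A B g := by
  constructor
  · rintro ⟨x, hx⟩
    refine Finset.mem_image.mpr ⟨fun a => x a.1, Finset.mem_univ _, ?_⟩
    funext b
    rw [Finset.sum_attach A (fun a => gV B g s(b.1, a) * x a)]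
    exact hx b.1 b.2
  · intro hmem
    obtain ⟨y, -, hy⟩ := Finset.mem_image.mp hmem
    refine ⟨fun a => if ha : a ∈ A then y ⟨a, ha⟩ else 0, fun b hb => ?_⟩
    have := congrFun hy ⟨b, hb⟩
    rw [← this, ← Finset.sum_attach A (fun a => gV B g s(b, a) * (if ha : a ∈ A then y ⟨a, ha⟩ else 0))]
    refine Finset.sum_congr rfl fun a _ => ?_
    rw [dif_pos a.2]

lemma count_h_bound (A B : Finset (Fin N)) (g) :
    (Finset.univ.filter fun h => SolvPair A B h g).card * 2 ^ (B.card - 1)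
      ≤ 2 ^ A.card * Fintype.card ({e : ET N // EBp B e} → ZMod 2) := by
  have hsub : (Finset.univ.filter fun h => SolvPair A B h g)
      ⊆ (Tset A B g).biUnion (fun v =>
        Finset.univ.filter fun h => LamL B h = fun b => v b + 1) := by
    intro h hh
    rw [Finset.mem_filter] at hh
    have hmem := (solvPair_iff_mem A B h g).mp hh.2
    refine Finset.mem_biUnion.mpr ⟨_, hmem, ?_⟩
    rw [Finset.mem_filter]
    refine ⟨Finset.mem_univ _, ?_⟩
    funext b
    show Lam B h b.1 = Lam B h b.1 + 1 + 1
    have : ∀ z : ZMod 2, z = z + 1 + 1 := by decide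
    exact this _
  calc (Finset.univ.filter fun h => SolvPair A B h g).card * 2 ^ (B.card - 1)
      ≤ (∑ v ∈ Tset A B g,
          (Finset.univ.filter fun h => LamL B h = fun b => v b + 1).card) * 2 ^ (B.card - 1) :=
        Nat.mul_le_mul_right _ ((Finset.card_le_card hsub).trans (Finset.card_biUnion_le))
    _ = ∑ v ∈ Tset A B g,
          (Finset.univ.filter fun h => LamL B h = fun b => v b + 1).card * 2 ^ (B.card - 1) :=
        Finset.sum_mul ..
    _ ≤ ∑ _v ∈ Tset A B g, Fintype.card ({e : ET N // EBp B e} → ZMod 2) :=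
        Finset.sum_le_sum fun v _ => fiber_bound B _
    _ = (Tset A B g).card * Fintype.card ({e : ET N // EBp B e} → ZMod 2) := by
        rw [Finset.sum_const, smul_eq_mul]
    _ ≤ 2 ^ A.card * Fintype.card ({e : ET N // EBp B e} → ZMod 2) := by
        apply Nat.mul_le_mul_right
        calc (Tset A B g).card ≤ Fintype.card ({a : Fin N // a ∈ A} → ZMod 2) :=
              le_of_le_of_eq (Finset.card_image_le) (Finset.card_univ)
          _ = 2 ^ A.card := by rw [Fintype.card_fun, ZMod.card, Fintype.card_coe]

lemma part1_main (A B : Finset (Fin N)) (hdisj : Disjoint A B) :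
    (Finset.univ.filter fun G : SimpleGraph (Fin N) => MatrixEqSolvable G A B).card
        * 2 ^ (B.card - 1)
      ≤ 2 ^ A.card * Fintype.card (SimpleGraph (Fin N)) := by
  have hnum : (Finset.univ.filter fun G : SimpleGraph (Fin N) => MatrixEqSolvable G A B).card
      = (Finset.univ.filter fun p : (({e : ET N // EBp B e} → ZMod 2) ×
          ({e : ET N // ¬ EBp B e} → ZMod 2)) => SolvPair A B p.1 p.2).card := by
    rw [card_filter_equiv ((graphEquiv N).trans (splitE B)) (fun G => MatrixEqSolvable G A B)]
    congr 1
    apply Finset.filter_congr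
    intro p _
    exact solv_iff A B hdisj p.1 p.2
  have hcardG : Fintype.card (SimpleGraph (Fin N))
      = Fintype.card ({e : ET N // EBp B e} → ZMod 2)
        * Fintype.card ({e : ET N // ¬ EBp B e} → ZMod 2) := by
    rw [Fintype.card_congr ((graphEquiv N).trans (splitE B)), Fintype.card_prod]
  rw [hnum, hcardG, card_filter_prod]
  calc (∑ g : {e : ET N // ¬ EBp B e} → ZMod 2,
          (Finset.univ.filter fun h => SolvPair A B h g).card) * 2 ^ (B.card - 1)
      = ∑ g : {e : ET N // ¬ EBp B e} → ZMod 2,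
          (Finset.univ.filter fun h => SolvPair A B h g).card * 2 ^ (B.card - 1) :=
        Finset.sum_mul ..
    _ ≤ ∑ _g : {e : ET N // ¬ EBp B e} → ZMod 2,
          2 ^ A.card * Fintype.card ({e : ET N // EBp B e} → ZMod 2) :=
        Finset.sum_le_sum fun g _ => count_h_bound A B g
    _ = Fintype.card ({e : ET N // ¬ EBp B e} → ZMod 2)
          * (2 ^ A.card * Fintype.card ({e : ET N // EBp B e} → ZMod 2)) := by
        rw [Finset.sum_const, smul_eq_mul, Finset.card_univ]
    _ = 2 ^ A.card * (Fintype.card ({e : ET N // EBp B e} → ZMod 2)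
          * Fintype.card ({e : ET N // ¬ EBp B e} → ZMod 2)) := by ring

lemma gV_add (B : Finset (Fin N)) (g₁ g₂) (e : Sym2 (Fin N)) :
    gV B (g₁ + g₂) e = gV B g₁ e + gV B g₂ e := by
  unfold gV
  by_cases hd : ¬ e.IsDiag
  · rw [dif_pos hd, dif_pos hd, dif_pos hd]
    by_cases hb : ¬ EBp B ⟨e, hd⟩
    · rw [dif_pos hb, dif_pos hb, dif_pos hb]; rfl
    · rw [dif_neg hb, dif_neg hb, dif_neg hb, add_zero]
  · rw [dif_neg hd, dif_neg hd, dif_neg hd, add_zero]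

lemma gV_smul (B : Finset (Fin N)) (c : ZMod 2) (g) (e : Sym2 (Fin N)) :
    gV B (c • g) e = c * gV B g e := by
  unfold gV
  by_cases hd : ¬ e.IsDiag
  · rw [dif_pos hd, dif_pos hd]
    by_cases hb : ¬ EBp B ⟨e, hd⟩
    · rw [dif_pos hb, dif_pos hb]; rfl
    · rw [dif_neg hb, dif_neg hb, mul_zero]
  · rw [dif_neg hd, dif_neg hd, mul_zero]

/-- left-multiplication by a row vector `y`, as a linear map in the A–B edge variables -/
def PhiL (A B : Finset (Fin N)) (y : {b : Fin N // b ∈ B} → ZMod 2) :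
    ({e : ET N // ¬ EBp B e} → ZMod 2) →ₗ[ZMod 2] ({a : Fin N // a ∈ A} → ZMod 2) where
  toFun g := fun a => ∑ b ∈ B.attach, y b * gV B g s(b.1, a.1)
  map_add' g₁ g₂ := by
    funext a
    simp only [Pi.add_apply]
    rw [← Finset.sum_add_distrib]
    refine Finset.sum_congr rfl fun b _ => ?_
    rw [gV_add, mul_add]
  map_smul' c g := by
    funext a
    simp only [Pi.smul_apply, smul_eq_mul, RingHom.id_apply]
    rw [Finset.mul_sum]
    refine Finset.sum_congr rfl fun b _ => ?_
    rw [gV_smul]; ring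

def chiG (B : Finset (Fin N)) (c d : Fin N) (hcd : c ≠ d) (hdB : d ∉ B) :
    {e : ET N // ¬ EBp B e} → ZMod 2 :=
  fun e' => if e' = ⟨⟨s(c,d), by simpa using hcd⟩, fun hb => hdB (hb d (by simp))⟩ then 1 else 0

lemma gV_chiG (B : Finset (Fin N)) (c d : Fin N) (hcd : c ≠ d) (hdB : d ∉ B)
    (e : Sym2 (Fin N)) :
    gV B (chiG B c d hcd hdB) e = if e = s(c,d) then 1 else 0 := by
  by_cases he : e = s(c,d)
  · subst he
    rw [if_pos rfl]
    unfold gV chiG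
    rw [dif_pos (by simpa using hcd), dif_pos (fun hb => hdB (hb d (by simp))), if_pos rfl]
  · rw [if_neg he]
    unfold gV chiG
    by_cases hdg : ¬ e.IsDiag
    · rw [dif_pos hdg]
      by_cases hb : ¬ EBp B ⟨e, hdg⟩
      · rw [dif_pos hb, if_neg]
        intro hEq
        exact he (congrArg (fun z => z.1.1) hEq)
      · rw [dif_neg hb]
    · rw [dif_neg hdg]

lemma phi_surj (A B : Finset (Fin N)) (hdisj : Disjoint A B)
    (y : {b : Fin N // b ∈ B} → ZMod 2) (hy : y ≠ 0) :
    Function.Surjective (PhiL A B y) := by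
  obtain ⟨b0, hb0⟩ : ∃ b0, y b0 ≠ 0 := by
    by_contra hcon
    push_neg at hcon
    exact hy (funext fun b => hcon b)
  have hyb0 : y b0 = 1 := (zmod2_cases (y b0)).resolve_left hb0
  have hne : ∀ a' : {a : Fin N // a ∈ A}, (b0 : Fin N) ≠ (a' : Fin N) :=
    fun a' hEq => (Finset.disjoint_left.mp hdisj a'.2) (hEq ▸ b0.2)
  have hnB : ∀ a' : {a : Fin N // a ∈ A}, (a' : Fin N) ∉ B :=
    fun a' => Finset.disjoint_left.mp hdisj a'.2
  intro t
  refine ⟨∑ a' : {a : Fin N // a ∈ A}, t a' • chiG B b0.1 a'.1 (hne a') (hnB a'), ?_⟩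
  have key : ∀ a' a : {a : Fin N // a ∈ A},
      PhiL A B y (chiG B b0.1 a'.1 (hne a') (hnB a')) a = if a = a' then 1 else 0 := by
    intro a' a
    show ∑ b ∈ B.attach, y b * gV B (chiG B b0.1 a'.1 (hne a') (hnB a')) s(b.1, a.1) = _
    have hterm : ∀ b ∈ B.attach, y b * gV B (chiG B b0.1 a'.1 (hne a') (hnB a')) s(b.1, a.1)
        = if a = a' then (if b = b0 then y b else 0) else 0 := by
      intro b _
      rw [gV_chiG]
      have hcond : (s(b.1, a.1) : Sym2 (Fin N)) = s(b0.1, a'.1) ↔ (b = b0 ∧ a = a') := by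
        rw [Sym2.eq_iff]
        constructor
        · rintro (⟨h1, h2⟩ | ⟨h1, h2⟩)
          · exact ⟨Subtype.ext h1, Subtype.ext h2⟩
          · exact absurd (h1 ▸ b.2) (hnB a')
        · rintro ⟨rfl, rfl⟩
          exact Or.inl ⟨rfl, rfl⟩
      by_cases h1 : a = a'
      · by_cases h2 : b = b0
        · rw [if_pos (hcond.mpr ⟨h2, h1⟩), if_pos h1, if_pos h2, mul_one]
        · rw [if_neg (fun hc => h2 (hcond.mp hc).1), if_pos h1, if_neg h2, mul_zero]
      · rw [if_neg (fun hc => h1 (hcond.mp hc).2), if_neg h1, mul_zero]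
    rw [Finset.sum_congr rfl hterm]
    by_cases h1 : a = a'
    · simp only [if_pos h1]
      rw [Finset.sum_ite_eq' B.attach b0 (fun b => y b), if_pos (Finset.mem_attach B b0), hyb0]
    · simp only [if_neg h1]
      exact Finset.sum_const_zero
  funext a
  rw [map_sum]
  have : ∀ a' : {a : Fin N // a ∈ A},
      (PhiL A B y (t a' • chiG B b0.1 a'.1 (hne a') (hnB a'))) a
        = if a = a' then t a' else 0 := by
    intro a'
    rw [map_smul]
    show t a' * (PhiL A B y (chiG B b0.1 a'.1 (hne a') (hnB a'))) a = _
    rw [key a' a, mul_ite, mul_one, mul_zero]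
  rw [Finset.sum_apply]
  rw [Finset.sum_congr rfl (fun a' _ => this a')]
  rw [Finset.sum_ite_eq Finset.univ a t, if_pos (Finset.mem_univ a)]

/-- "bad" A–B edge configurations: some nonzero row combination vanishes -/
def BadG (A B : Finset (Fin N)) (g : {e : ET N // ¬ EBp B e} → ZMod 2) : Prop :=
  ∃ y : {b : Fin N // b ∈ B} → ZMod 2, y ≠ 0 ∧ PhiL A B y g = 0

lemma bad_count (A B : Finset (Fin N)) (hdisj : Disjoint A B) :
    (Finset.univ.filter fun g => BadG A B g).card * 2 ^ A.card
      ≤ 2 ^ B.card * Fintype.card ({e : ET N // ¬ EBp B e} → ZMod 2) := by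
  have hsub : (Finset.univ.filter fun g => BadG A B g)
      ⊆ (Finset.univ.filter fun y : {b : Fin N // b ∈ B} → ZMod 2 => y ≠ 0).biUnion
          (fun y => Finset.univ.filter fun g => PhiL A B y g = 0) := by
    intro g hg
    rw [Finset.mem_filter] at hg
    obtain ⟨-, y, hy, hPhi⟩ := hg
    exact Finset.mem_biUnion.mpr ⟨y, by simp [hy], by simp [hPhi]⟩
  have hfiber : ∀ y : {b : Fin N // b ∈ B} → ZMod 2, y ≠ 0 →
      (Finset.univ.filter fun g => PhiL A B y g = 0).card * 2 ^ A.card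
        = Fintype.card ({e : ET N // ¬ EBp B e} → ZMod 2) := by
    intro y hy
    have e1 : (Finset.univ.filter fun g => PhiL A B y g = 0).card
        = Fintype.card (LinearMap.ker (PhiL A B y)) := by
      rw [← Fintype.card_subtype]
      apply Fintype.card_congr
      apply Equiv.subtypeEquiv (Equiv.refl _)
      intro g
      simp [LinearMap.mem_ker]
    have htop : LinearMap.range (PhiL A B y) = ⊤ :=
      LinearMap.range_eq_top.mpr (phi_surj A B hdisj y hy)
    have e2 : Nat.card (LinearMap.range (PhiL A B y)) = 2 ^ A.card := by
      have h1 : Nat.card (LinearMap.range (PhiL A B y))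
          = Nat.card ({a : Fin N // a ∈ A} → ZMod 2) :=
        Nat.card_congr ((LinearEquiv.ofEq _ _ htop).trans Submodule.topEquiv).toEquiv
      rw [h1, Nat.card_eq_fintype_card, Fintype.card_fun, ZMod.card, Fintype.card_coe]
    have hquot : Nat.card (({e : ET N // ¬ EBp B e} → ZMod 2) ⧸ LinearMap.ker (PhiL A B y))
        = Nat.card (LinearMap.range (PhiL A B y)) :=
      Nat.card_congr (PhiL A B y).quotKerEquivRange.toEquiv
    rw [e1]
    rw [← Nat.card_eq_fintype_card (α := LinearMap.ker (PhiL A B y)),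
      ← Nat.card_eq_fintype_card (α := {e : ET N // ¬ EBp B e} → ZMod 2), ← e2, ← hquot]
    exact (Submodule.card_eq_card_quotient_mul_card _).symm
  calc (Finset.univ.filter fun g => BadG A B g).card * 2 ^ A.card
      ≤ (∑ y ∈ Finset.univ.filter fun y : {b : Fin N // b ∈ B} → ZMod 2 => y ≠ 0,
          (Finset.univ.filter fun g => PhiL A B y g = 0).card) * 2 ^ A.card :=
        Nat.mul_le_mul_right _ ((Finset.card_le_card hsub).trans Finset.card_biUnion_le)
    _ = ∑ y ∈ Finset.univ.filter fun y : {b : Fin N // b ∈ B} → ZMod 2 => y ≠ 0,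
          (Finset.univ.filter fun g => PhiL A B y g = 0).card * 2 ^ A.card :=
        Finset.sum_mul ..
    _ = ∑ y ∈ Finset.univ.filter fun y : {b : Fin N // b ∈ B} → ZMod 2 => y ≠ 0,
          Fintype.card ({e : ET N // ¬ EBp B e} → ZMod 2) := by
        refine Finset.sum_congr rfl fun y hy => ?_
        exact hfiber y (Finset.mem_filter.mp hy).2
    _ = (Finset.univ.filter fun y : {b : Fin N // b ∈ B} → ZMod 2 => y ≠ 0).card
          * Fintype.card ({e : ET N // ¬ EBp B e} → ZMod 2) := by
        rw [Finset.sum_const, smul_eq_mul]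
    _ ≤ 2 ^ B.card * Fintype.card ({e : ET N // ¬ EBp B e} → ZMod 2) := by
        apply Nat.mul_le_mul_right
        calc (Finset.univ.filter fun y : {b : Fin N // b ∈ B} → ZMod 2 => y ≠ 0).card
            ≤ Fintype.card ({b : Fin N // b ∈ B} → ZMod 2) :=
              le_of_le_of_eq (Finset.card_filter_le _ _) Finset.card_univ
          _ = 2 ^ B.card := by rw [Fintype.card_fun, ZMod.card, Fintype.card_coe]

lemma good_solv (A B : Finset (Fin N)) (g : {e : ET N // ¬ EBp B e} → ZMod 2)
    (hg : ¬ BadG A B g) :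
    ∀ h : {e : ET N // EBp B e} → ZMod 2, SolvPair A B h g := by
  haveI : Fact (Nat.Prime 2) := Nat.fact_prime_two
  set M : Matrix {b : Fin N // b ∈ B} {a : Fin N // a ∈ A} (ZMod 2) :=
    fun b a => gV B g s(b.1, a.1) with hM
  have hPhiM : ∀ y, PhiL A B y g = Matrix.vecMulLinear M y := by
    intro y
    funext a
    show ∑ b ∈ B.attach, y b * gV B g s(b.1, a.1) = _
    rw [Matrix.vecMulLinear_apply]
    show _ = ∑ b : {b : Fin N // b ∈ B}, y b * M b a
    rw [Finset.univ_eq_attach]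
  have hinj : Function.Injective M.vecMulLinear := by
    rw [← LinearMap.ker_eq_bot]
    refine LinearMap.ker_eq_bot'.mpr fun y hy0 => ?_
    by_contra hy
    exact hg ⟨y, hy, by rw [hPhiM]; exact hy0⟩
  have hsurj : Function.Surjective M.mulVecLin := by
    have h1 : Module.finrank (ZMod 2) (LinearMap.range M.vecMulLinear) = B.card := by
      rw [LinearMap.finrank_range_of_inj hinj, Module.finrank_fintype_fun_eq_card,
        Fintype.card_coe]
    have h2 : M.rank = B.card := by
      rw [← Matrix.rank_transpose]
      unfold Matrix.rank
      rw [Matrix.mulVecLin_transpose]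
      exact h1
    have h3 : LinearMap.range M.mulVecLin = ⊤ := by
      apply Submodule.eq_top_of_finrank_eq
      have hr : Module.finrank (ZMod 2) (LinearMap.range M.mulVecLin) = M.rank := rfl
      rw [hr, h2, Module.finrank_fintype_fun_eq_card, Fintype.card_coe]
    exact LinearMap.range_eq_top.mp h3
  intro h
  obtain ⟨x', hx'⟩ := hsurj (fun b => Lam B h b.1 + 1)
  refine ⟨fun a => if ha : a ∈ A then x' ⟨a, ha⟩ else 0, fun b hb => ?_⟩
  have hb' := congrFun hx' ⟨b, hb⟩
  rw [Matrix.mulVecLin_apply] at hb'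
  have hmv : M.mulVec x' ⟨b, hb⟩ = ∑ a ∈ A.attach, gV B g s(b, a.1) * x' a := by
    show ∑ a : {a : Fin N // a ∈ A}, M ⟨b, hb⟩ a * x' a = _
    rw [Finset.univ_eq_attach]
  rw [hmv] at hb'
  rw [← hb']
  rw [← Finset.sum_attach A
    (fun a => gV B g s(b, a) * (if ha : a ∈ A then x' ⟨a, ha⟩ else 0))]
  refine Finset.sum_congr rfl fun a _ => ?_
  rw [dif_pos a.2]

lemma part2_count (A B : Finset (Fin N)) (hdisj : Disjoint A B) :
    Fintype.card ({e : ET N // EBp B e} → ZMod 2)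
        * (Finset.univ.filter fun g => ¬ BadG A B g).card
      ≤ (Finset.univ.filter fun G : SimpleGraph (Fin N) => MatrixEqSolvable G A B).card := by
  have hnum : (Finset.univ.filter fun G : SimpleGraph (Fin N) => MatrixEqSolvable G A B).card
      = (Finset.univ.filter fun p : (({e : ET N // EBp B e} → ZMod 2) ×
          ({e : ET N // ¬ EBp B e} → ZMod 2)) => SolvPair A B p.1 p.2).card := by
    rw [card_filter_equiv ((graphEquiv N).trans (splitE B)) (fun G => MatrixEqSolvable G A B)]
    congr 1
    apply Finset.filter_congr
    intro p _
    exact solv_iff A B hdisj p.1 p.2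
  rw [hnum, card_filter_prod]
  calc Fintype.card ({e : ET N // EBp B e} → ZMod 2)
          * (Finset.univ.filter fun g => ¬ BadG A B g).card
      = ∑ g ∈ Finset.univ.filter fun g => ¬ BadG A B g,
          Fintype.card ({e : ET N // EBp B e} → ZMod 2) := by
        rw [Finset.sum_const, smul_eq_mul, mul_comm]
    _ = ∑ g ∈ Finset.univ.filter fun g => ¬ BadG A B g,
          (Finset.univ.filter fun h => SolvPair A B h g).card := by
        refine Finset.sum_congr rfl fun g hg => ?_
        rw [Finset.filter_true_of_mem fun h _ =>
          good_solv A B g (Finset.mem_filter.mp hg).2 h, Finset.card_univ]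
    _ ≤ ∑ g : {e : ET N // ¬ EBp B e} → ZMod 2,
          (Finset.univ.filter fun h => SolvPair A B h g).card :=
        Finset.sum_le_sum_of_subset (Finset.filter_subset _ _)

lemma totalpos : (0:ℝ) < Fintype.card (SimpleGraph (Fin N)) := by
  have : Nonempty (SimpleGraph (Fin N)) := ⟨⊥⟩
  exact_mod_cast Fintype.card_pos

lemma psUnif_le (A B : Finset (Fin N)) (hdisj : Disjoint A B) :
    psUnif A B ≤ (2:ℝ) ^ A.card / 2 ^ (B.card - 1) := by
  unfold psUnif
  rw [div_le_div_iff₀ totalpos (by positivity)]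
  exact_mod_cast part1_main A B hdisj

lemma psUnif_ge (A B : Finset (Fin N)) (hdisj : Disjoint A B) :
    1 - (2:ℝ) ^ B.card / 2 ^ A.card ≤ psUnif A B := by
  set H := Fintype.card ({e : ET N // EBp B e} → ZMod 2) with hH
  set G := Fintype.card ({e : ET N // ¬ EBp B e} → ZMod 2) with hG
  set bd := (Finset.univ.filter fun g => BadG A B g).card with hbd
  set gd := (Finset.univ.filter fun g => ¬ BadG A B g).card with hgd
  have hHpos : 0 < H := Fintype.card_pos
  have hGpos : 0 < G := Fintype.card_pos
  have hGg : bd + gd = G := by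
    rw [hbd, hgd, Finset.card_filter_add_card_filter_not, Finset.card_univ]
  have htot : Fintype.card (SimpleGraph (Fin N)) = H * G := by
    rw [Fintype.card_congr ((graphEquiv N).trans (splitE B)), Fintype.card_prod]
  have hnum := part2_count A B hdisj
  have hbad := bad_count A B hdisj
  -- real versions
  have hbdR : (bd : ℝ) ≤ 2 ^ B.card * G / 2 ^ A.card := by
    rw [le_div_iff₀ (by positivity)]
    calc (bd : ℝ) * 2 ^ A.card = ((bd * 2 ^ A.card : ℕ) : ℝ) := by push_cast; ring
      _ ≤ ((2 ^ B.card * G : ℕ) : ℝ) := by exact_mod_cast hbad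
      _ = 2 ^ B.card * G := by push_cast; ring
  have h1 : 1 - (2:ℝ) ^ B.card / 2 ^ A.card ≤ (gd : ℝ) / G := by
    have hgdR : (gd : ℝ) = G - bd := by
      have : (bd : ℝ) + gd = G := by exact_mod_cast hGg
      linarith
    rw [hgdR, sub_div, div_self (by positivity : (G:ℝ) ≠ 0)]
    have : (bd : ℝ) / G ≤ (2:ℝ) ^ B.card / 2 ^ A.card := by
      rw [div_le_iff₀ (by positivity : (0:ℝ) < (G:ℝ))]
      calc (bd:ℝ) ≤ 2 ^ B.card * G / 2 ^ A.card := hbdR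
        _ = 2 ^ B.card / 2 ^ A.card * G := by ring
    linarith
  have h2 : (gd : ℝ) / G ≤ psUnif A B := by
    unfold psUnif
    rw [htot, div_le_div_iff₀ (by positivity : (0:ℝ) < (G:ℝ)) (by positivity)]
    push_cast
    calc (gd : ℝ) * (H * G) = (H * gd : ℕ) * G := by push_cast; ring
      _ ≤ ((Finset.univ.filter fun G : SimpleGraph (Fin N) =>
            MatrixEqSolvable G A B).card : ℝ) * G := by
          have : ((H * gd : ℕ) : ℝ) ≤ ((Finset.univ.filter fun G : SimpleGraph (Fin N) =>
              MatrixEqSolvable G A B).card : ℝ) := by exact_mod_cast hnum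
          exact mul_le_mul_of_nonneg_right this (by positivity)
  linarith

lemma cardAB (A B : Finset (Fin N)) (hdisj : Disjoint A B) (hu : A ∪ B = Finset.univ) :
    A.card + B.card = N := by
  rw [← Finset.card_union_of_disjoint hdisj, hu, Finset.card_univ, Fintype.card_fin]

theorem solvability_probability_limits (α : ℝ) (hα0 : 0 < α) (hα1 : α < 1) :
    ((α < 1 / 2) →
      ∀ (A B : (N : ℕ) → Finset (Fin N)),
        (∀ N : ℕ, (A N).card = ⌊α * (N : ℝ)⌋₊) →
        (∀ N : ℕ, Disjoint (A N) (B N)) →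
        (∀ N : ℕ, A N ∪ B N = Finset.univ) →
        ∀ ε : ℝ, 0 < ε → ∃ N₀ : ℕ, ∀ N : ℕ, N₀ ≤ N →
          Even (N - ⌊α * (N : ℝ)⌋₊) → psUnif (A N) (B N) < ε) ∧
    ((1 / 2 < α) →
      ∀ (A B : (N : ℕ) → Finset (Fin N)),
        (∀ N : ℕ, (A N).card = ⌈α * (N : ℝ)⌉₊) →
        (∀ N : ℕ, Disjoint (A N) (B N)) →
        (∀ N : ℕ, A N ∪ B N = Finset.univ) →
        ∀ ε : ℝ, 0 < ε → ∃ N₀ : ℕ, ∀ N : ℕ, N₀ ≤ N →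
          Even (N - ⌈α * (N : ℝ)⌉₊) → 1 - ε < psUnif (A N) (B N)) := by
  constructor
  · intro hα A B hA hdisj hu ε hε
    obtain ⟨m, hm⟩ := exists_pow_lt_of_lt_one hε (by norm_num : (1/2:ℝ) < 1)
    set δ : ℝ := 1 - 2*α with hδdef
    have hδpos : 0 < δ := by rw [hδdef]; linarith
    refine ⟨⌈((m:ℝ)+1)/δ⌉₊, fun N hN _ => ?_⟩
    have hNR : ((m:ℝ)+1)/δ ≤ N := le_trans (Nat.le_ceil _) (by exact_mod_cast hN)
    have hδN : (m:ℝ) + 1 ≤ δ * N := by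
      rw [div_le_iff₀ hδpos] at hNR; linarith
    have hAle : ((A N).card : ℝ) ≤ α * N := by
      rw [hA N]; exact Nat.floor_le (by positivity)
    have hNat : 2 * (A N).card + m + 1 ≤ N := by
      have hr : 2*((A N).card:ℝ) + m + 1 ≤ N := by
        have hd : δ * N = N - 2*α*N := by rw [hδdef]; ring
        nlinarith [hδN, hAle]
      exact_mod_cast hr
    have hAB := cardAB (A N) (B N) (hdisj N) (hu N)
    have hmb : (A N).card + m ≤ (B N).card - 1 := by omega
    have hble : psUnif (A N) (B N) ≤ (2:ℝ)^(A N).card / 2^((B N).card - 1) :=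
      psUnif_le _ _ (hdisj N)
    have hkey : (2:ℝ)^(A N).card / 2^((B N).card - 1) ≤ (1/2)^m := by
      rw [one_div_pow, div_le_div_iff₀ (by positivity) (by positivity), one_mul, ← pow_add]
      exact pow_le_pow_right₀ one_le_two hmb
    linarith
  · intro hα A B hA hdisj hu ε hε
    obtain ⟨m, hm⟩ := exists_pow_lt_of_lt_one hε (by norm_num : (1/2:ℝ) < 1)
    set δ : ℝ := 2*α - 1 with hδdef
    have hδpos : 0 < δ := by rw [hδdef]; linarith
    refine ⟨⌈(m:ℝ)/δ⌉₊, fun N hN _ => ?_⟩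
    have hNR : ((m:ℝ))/δ ≤ N := le_trans (Nat.le_ceil _) (by exact_mod_cast hN)
    have hδN : (m:ℝ) ≤ δ * N := by
      rw [div_le_iff₀ hδpos] at hNR; linarith
    have hAge : α * N ≤ ((A N).card : ℝ) := by
      rw [hA N]; exact Nat.le_ceil _
    have hNat : N + m ≤ 2 * (A N).card := by
      have hr : (N:ℝ) + m ≤ 2*((A N).card:ℝ) := by
        have hd : δ * N = 2*α*N - N := by rw [hδdef]; ring
        nlinarith [hδN, hAge]
      exact_mod_cast hr
    have hAB := cardAB (A N) (B N) (hdisj N) (hu N)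
    have hmb : (B N).card + m ≤ (A N).card := by omega
    have hbge : 1 - (2:ℝ)^(B N).card / 2^((A N).card) ≤ psUnif (A N) (B N) :=
      psUnif_ge _ _ (hdisj N)
    have hkey : (2:ℝ)^(B N).card / 2^((A N).card) ≤ (1/2)^m := by
      rw [one_div_pow, div_le_div_iff₀ (by positivity) (by positivity), one_mul, ← pow_add]
      exact pow_le_pow_right₀ one_le_two hmb
    linarith
end
end

section
/- Fix a bipartition of {1,…,N} into A and B with |B| = N_B even, and let i ∈ A and j ∈ B. Let P be any product of controlled-Z gates CZ_{e} over pairs e of distinct qubits with e ≠ {i,j}. Then for all bitstrings z₁, z₂, z₃, z₄ ∈ {0,1}^N, the average over U ∈ {I, CZ_{ij}} of tr[(S_A ⊗ Y^{⊗2}) P^{⊗2} U^{⊗2} (|z₁⟩⟨z₂| ⊗ |z₃⟩⟨z₄|) (U†)^{⊗2} (P†)^{⊗2}] equals F_{ij}(z₁,z₂,z₃,z₄) · tr[(S_A ⊗ Y^{⊗2}) P^{⊗2} (|z₁⟩⟨z₂| ⊗ |z₃⟩⟨z₄|) (P†)^{⊗2}], where F_{ij}(z₁,z₂,z₃,z₄)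 = 0 if (z₁)_i ≠ (z₂)_i and (z₁)_j = (z₃)_j, and F_{ij}(z₁,z₂,z₃,z₄) = 1 otherwise. -/
noncomputable section
open scoped BigOperators Classical ComplexConjugate ComplexOrder Matrix

/-- The Pauli matrix σ_y = [[0, -i], [i, 0]], indexed by `Bool`. -/
def sigmaY : Bool → Bool → ℂ := fun x y =>
  if x = y then 0 else if x = false then -Complex.I else Complex.I

/-- The controlled-Z gate between qubits `a` and `b`, acting diagonally on the
computational basis of `N` qubits by `CZ_{ab}|z⟩ = (−1)^{z_a z_b}|z⟩`. -/
def CZm {N : ℕ} (a b : Fin N) : Matrix (Fin N → Bool) (Fin N → Bool) ℂ :=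
  Matrix.of fun z w =>
    if z = w then (if z a = true ∧ z b = true then -1 else 1) else 0

/-- `M ⊗ M`: the same operator acting on each of two copies of the `N`-qubit space. -/
def twoCopies {N : ℕ} (M : Matrix (Fin N → Bool) (Fin N → Bool) ℂ) :
    Matrix ((Fin N → Bool) × (Fin N → Bool)) ((Fin N → Bool) × (Fin N → Bool)) ℂ :=
  Matrix.of fun p q => M p.1 q.1 * M p.2 q.2

/-- The swap of the `A`-registers between the two copies:
`S_A (|z⟩ ⊗ |z'⟩) = |z'_A z_B⟩ ⊗ |z_A z'_B⟩`. -/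
def swapA {N : ℕ} (A : Finset (Fin N)) :
    Matrix ((Fin N → Bool) × (Fin N → Bool)) ((Fin N → Bool) × (Fin N → Bool)) ℂ :=
  Matrix.of fun p q =>
    if p.1 = (fun k => if k ∈ A then q.2 k else q.1 k) ∧
       p.2 = (fun k => if k ∈ A then q.1 k else q.2 k) then 1 else 0

/-- `σ_y` applied to every qubit of `B = Aᶜ` (and identity on the `A` qubits)
in a single copy of the `N`-qubit space. -/
def YonB {N : ℕ} (A : Finset (Fin N)) : Matrix (Fin N → Bool) (Fin N → Bool) ℂ :=
  Matrix.of fun x y =>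
    ∏ k, if k ∈ A then (if x k = y k then 1 else 0) else sigmaY (x k) (y k)

/-- The outer-product operator `|z₁⟩⟨z₂| ⊗ |z₃⟩⟨z₄|` on the two copies. -/
def outerOp {N : ℕ} (z₁ z₂ z₃ z₄ : Fin N → Bool) :
    Matrix ((Fin N → Bool) × (Fin N → Bool)) ((Fin N → Bool) × (Fin N → Bool)) ℂ :=
  Matrix.of fun p q => if p = (z₁, z₃) ∧ q = (z₂, z₄) then 1 else 0

namespace CZAux

variable {N : ℕ}

lemma cz_eq_diagonal (a b : Fin N) :
    CZm a b = Matrix.diagonal (fun z => if z a = true ∧ z b = true then (-1:ℂ) else 1) := by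
  ext z w
  by_cases h : z = w <;> simp [CZm, Matrix.diagonal_apply, h]

lemma prod_diag (L : List (Fin N × Fin N)) :
    ∃ d : (Fin N → Bool) → ℂ, (∀ z, d z = 1 ∨ d z = -1) ∧
      (L.map fun p => CZm p.1 p.2).prod = Matrix.diagonal d := by
  induction L with
  | nil => exact ⟨fun _ => 1, fun _ => Or.inl rfl, by simp⟩
  | cons p L ih =>
    obtain ⟨d, hd, hprod⟩ := ih
    refine ⟨fun z => (if z p.1 = true ∧ z p.2 = true then (-1:ℂ) else 1) * d z, ?_, ?_⟩
    · intro z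
      dsimp only
      rcases hd z with h | h <;> rw [h] <;> split <;> norm_num
    · rw [List.map_cons, List.prod_cons, hprod, cz_eq_diagonal,
        Matrix.diagonal_mul_diagonal]

lemma twoCopies_diagonal (d : (Fin N → Bool) → ℂ) :
    twoCopies (Matrix.diagonal d) = Matrix.diagonal (fun p => d p.1 * d p.2) := by
  ext p q
  by_cases h : p = q
  · subst h; simp [twoCopies, Matrix.diagonal_apply]
  · have h1 : p.1 ≠ q.1 ∨ p.2 ≠ q.2 := by
      by_contra hc; push_neg at hc; exact h (Prod.ext hc.1 hc.2)
    rcases h1 with h1 | h1 <;>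
      simp [twoCopies, Matrix.diagonal_apply_ne _ h, Matrix.diagonal_apply_ne _ h1]

lemma twoCopies_one : twoCopies (1 : Matrix (Fin N → Bool) (Fin N → Bool) ℂ) = 1 := by
  have h := twoCopies_diagonal (N := N) (fun _ => (1:ℂ))
  simpa using h

lemma diag_outer_diag (D D' : ((Fin N → Bool) × (Fin N → Bool)) → ℂ)
    (z₁ z₂ z₃ z₄ : Fin N → Bool) :
    Matrix.diagonal D * outerOp z₁ z₂ z₃ z₄ * Matrix.diagonal D' =
      (D (z₁,z₃) * D' (z₂,z₄)) • outerOp z₁ z₂ z₃ z₄ := by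
  ext p q
  rw [Matrix.mul_diagonal, Matrix.diagonal_mul]
  simp only [outerOp, Matrix.of_apply, Matrix.smul_apply, smul_eq_mul]
  split_ifs with h
  · obtain ⟨h1, h2⟩ := h; subst h1; subst h2; ring
  · ring

lemma trace_mul_outer
    (M : Matrix ((Fin N → Bool) × (Fin N → Bool)) ((Fin N → Bool) × (Fin N → Bool)) ℂ)
    (z₁ z₂ z₃ z₄ : Fin N → Bool) :
    Matrix.trace (M * outerOp z₁ z₂ z₃ z₄) = M (z₂,z₄) (z₁,z₃) := by
  simp [Matrix.trace, Matrix.diag, Matrix.mul_apply, outerOp, ite_and,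
    Finset.sum_ite_eq, Finset.sum_ite_eq']

lemma trace_diag_outer
    (M : Matrix ((Fin N → Bool) × (Fin N → Bool)) ((Fin N → Bool) × (Fin N → Bool)) ℂ)
    (D D' : ((Fin N → Bool) × (Fin N → Bool)) → ℂ) (z₁ z₂ z₃ z₄ : Fin N → Bool) :
    Matrix.trace (M * Matrix.diagonal D * outerOp z₁ z₂ z₃ z₄ * Matrix.diagonal D') =
      D (z₁, z₃) * D' (z₂, z₄) * M (z₂, z₄) (z₁, z₃) := by
  have h : M * Matrix.diagonal D * outerOp z₁ z₂ z₃ z₄ * Matrix.diagonal D' =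
      M * (Matrix.diagonal D * outerOp z₁ z₂ z₃ z₄ * Matrix.diagonal D') := by
    noncomm_ring
  rw [h, diag_outer_diag, Matrix.mul_smul, Matrix.trace_smul, trace_mul_outer,
    smul_eq_mul]

lemma swapA_apply_eq (A : Finset (Fin N)) (p r : (Fin N → Bool) × (Fin N → Bool)) :
    swapA A p r = if r = ((fun k => if k ∈ A then p.2 k else p.1 k),
                          (fun k => if k ∈ A then p.1 k else p.2 k)) then 1 else 0 := by
  simp only [swapA, Matrix.of_apply]
  congr 1
  apply propext
  constructor
  · rintro ⟨h1, h2⟩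
    have e1 := congrFun h1
    have e2 := congrFun h2
    refine Prod.ext (funext fun k => ?_) (funext fun k => ?_) <;>
        by_cases h : k ∈ A <;> simp only [h, if_true, if_false]
    · have h2 := e2 k; simp only [h, if_true] at h2; exact h2.symm
    · have h1' := e1 k; simp only [h, if_false] at h1'; exact h1'.symm
    · have h1' := e1 k; simp only [h, if_true] at h1'; exact h1'.symm
    · have h2 := e2 k; simp only [h, if_false] at h2; exact h2.symm
  · rintro rfl
    constructor <;> funext k <;> by_cases h : k ∈ A <;> simp [h]

lemma swapA_mul_apply (A : Finset (Fin N))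
    (M : Matrix ((Fin N → Bool) × (Fin N → Bool)) ((Fin N → Bool) × (Fin N → Bool)) ℂ)
    (p q : (Fin N → Bool) × (Fin N → Bool)) :
    (swapA A * M) p q = M ((fun k => if k ∈ A then p.2 k else p.1 k),
                           (fun k => if k ∈ A then p.1 k else p.2 k)) q := by
  rw [Matrix.mul_apply]
  simp [swapA_apply_eq, Finset.sum_ite_eq, Finset.sum_ite_eq']

lemma YonB_eq_zero_of_A {A : Finset (Fin N)} {x y : Fin N → Bool} {k : Fin N}
    (hk : k ∈ A) (h : x k ≠ y k) : YonB A x y = 0 := by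
  unfold YonB
  rw [Matrix.of_apply]
  apply Finset.prod_eq_zero (Finset.mem_univ k)
  simp [hk, h]

lemma YonB_eq_zero_of_B {A : Finset (Fin N)} {x y : Fin N → Bool} {k : Fin N}
    (hk : k ∉ A) (h : x k = y k) : YonB A x y = 0 := by
  unfold YonB
  rw [Matrix.of_apply]
  apply Finset.prod_eq_zero (Finset.mem_univ k)
  simp [hk, sigmaY, h]

end CZAux

theorem cz_average_mixed_pair
    (N : ℕ) (A : Finset (Fin N)) (hB : Even Aᶜ.card)
    (i j : Fin N) (hi : i ∈ A) (hj : j ∉ A)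
    (L : List (Fin N × Fin N))
    (hL : ∀ p ∈ L, p.1 ≠ p.2 ∧ ¬(p.1 = i ∧ p.2 = j) ∧ ¬(p.1 = j ∧ p.2 = i))
    (P : Matrix (Fin N → Bool) (Fin N → Bool) ℂ)
    (hP : P = (L.map fun p => CZm p.1 p.2).prod)
    (z₁ z₂ z₃ z₄ : Fin N → Bool) :
    (1 / 2 : ℂ) *
        (Matrix.trace (swapA A * twoCopies (YonB A) * twoCopies P * twoCopies (1 : Matrix (Fin N → Bool) (Fin N → Bool) ℂ) *
            outerOp z₁ z₂ z₃ z₄ * twoCopies ((1 : Matrix (Fin N → Bool) (Fin N → Bool) ℂ)ᴴ) * twoCopies (Pᴴ)) +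
          Matrix.trace (swapA A * twoCopies (YonB A) * twoCopies P * twoCopies (CZm i j) *
            outerOp z₁ z₂ z₃ z₄ * twoCopies ((CZm i j)ᴴ) * twoCopies (Pᴴ))) =
      (if z₁ i ≠ z₂ i ∧ z₁ j = z₃ j then (0 : ℂ) else 1) *
        Matrix.trace (swapA A * twoCopies (YonB A) * twoCopies P *
          outerOp z₁ z₂ z₃ z₄ * twoCopies (Pᴴ)) := by
  classical
  obtain ⟨dP, hdP, hPd⟩ := CZAux.prod_diag L
  have hPdiag : P = Matrix.diagonal dP := hP.trans hPd
  set dC : (Fin N → Bool) → ℂ := fun z => if z i = true ∧ z j = true then -1 else 1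
    with hdCdef
  have hC : CZm i j = Matrix.diagonal dC := CZAux.cz_eq_diagonal i j
  have hstarP : ∀ z, star (dP z) = dP z := fun z => by
    rcases hdP z with h | h <;> simp [h]
  have hstarC : ∀ z, star (dC z) = dC z := fun z => by
    simp only [hdCdef]; split <;> simp
  have hPH : Pᴴ = Matrix.diagonal dP := by
    rw [hPdiag, Matrix.diagonal_conjTranspose,
      show star dP = dP from funext hstarP]
  have hCH : (CZm i j)ᴴ = Matrix.diagonal dC := by
    rw [hC, Matrix.diagonal_conjTranspose,
      show star dC = dC from funext hstarC]
  rw [hPH, hCH, hPdiag, hC, Matrix.conjTranspose_one]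
  simp only [CZAux.twoCopies_one, CZAux.twoCopies_diagonal, mul_one]
  set S := swapA A with hS
  set Y2 := twoCopies (YonB A) with hY2
  set DPf : ((Fin N → Bool) × (Fin N → Bool)) → ℂ := fun p => dP p.1 * dP p.2 with hDPf
  set DCf : ((Fin N → Bool) × (Fin N → Bool)) → ℂ := fun p => dC p.1 * dC p.2 with hDCf
  have assoc2 : S * Y2 * Matrix.diagonal DPf * Matrix.diagonal DCf *
      outerOp z₁ z₂ z₃ z₄ * Matrix.diagonal DCf * Matrix.diagonal DPf
      = (S * Y2) * Matrix.diagonal (DPf * DCf) * outerOp z₁ z₂ z₃ z₄ *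
        Matrix.diagonal (DCf * DPf) := by
    rw [mul_assoc (S * Y2) (Matrix.diagonal DPf) (Matrix.diagonal DCf),
      mul_assoc (S * Y2 * (Matrix.diagonal DPf * Matrix.diagonal DCf) *
        outerOp z₁ z₂ z₃ z₄) (Matrix.diagonal DCf) (Matrix.diagonal DPf),
      Matrix.diagonal_mul_diagonal, Matrix.diagonal_mul_diagonal]
    rfl
  rw [assoc2, CZAux.trace_diag_outer, CZAux.trace_diag_outer]
  simp only [Pi.mul_apply, hDPf, hDCf]
  have hW : (S * Y2) (z₂,z₄) (z₁,z₃) =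
      YonB A (fun k => if k ∈ A then z₄ k else z₂ k) z₁ *
      YonB A (fun k => if k ∈ A then z₂ k else z₄ k) z₃ := by
    rw [hS, hY2, CZAux.swapA_mul_apply]
    rfl
  by_cases h41 : z₄ i = z₁ i
  · by_cases h2j : z₂ j = z₁ j
    · have h0 : YonB A (fun k => if k ∈ A then z₄ k else z₂ k) z₁ = 0 :=
        CZAux.YonB_eq_zero_of_B hj (by simpa [hj] using h2j)
      rw [hW, h0]; ring
    · by_cases h23 : z₂ i = z₃ i
      · by_cases h43 : z₄ j = z₃ j
        · have h0 : YonB A (fun k => if k ∈ A then z₂ k else z₄ k) z₃ = 0 :=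
            CZAux.YonB_eq_zero_of_B hj (by simpa [hj] using h43)
          rw [hW, h0]; ring
        · -- main nonzero case
          have e2j : z₂ j = !(z₁ j) := by
            cases hb : z₁ j <;> cases hb' : z₂ j <;> simp_all
          have e4j : z₄ j = !(z₃ j) := by
            cases hb : z₃ j <;> cases hb' : z₄ j <;> simp_all
          have key : (1/2 : ℂ) * (1 + dC z₁ * dC z₃ * (dC z₂ * dC z₄)) =
              (if z₁ i ≠ z₂ i ∧ z₁ j = z₃ j then (0:ℂ) else 1) := by
            simp only [hdCdef]
            cases hb1 : z₁ i <;> cases hb2 : z₁ j <;> cases hb3 : z₃ i <;>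
              cases hb4 : z₃ j <;>
              simp [h41, h23, e2j, e4j, hb1, hb2, hb3, hb4] <;> norm_num
          linear_combination
            (dP z₁ * dP z₃ * (dP z₂ * dP z₄) * ((S * Y2) (z₂,z₄) (z₁,z₃))) * key
      · have h0 : YonB A (fun k => if k ∈ A then z₂ k else z₄ k) z₃ = 0 :=
          CZAux.YonB_eq_zero_of_A hi (by simpa [hi] using h23)
        rw [hW, h0]; ring
  · have h0 : YonB A (fun k => if k ∈ A then z₄ k else z₂ k) z₁ = 0 :=
      CZAux.YonB_eq_zero_of_A hi (by simpa [hi] using h41)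
    rw [hW, h0]; ring
end
end

section
/- Let β₁ = (φ_1,…,φ_n) and β₂ = (φ'_1,…,φ'_n) be ordered orthonormal bases of ℂ^n, and γ₁ = (η_1,…,η_m) and γ₂ = (η'_1,…,η'_m) be ordered orthonormal bases of ℂ^m. Let β₁ ⊗ γ₁ and β₂ ⊗ γ₂ denote the ordered product bases of ℂ^n ⊗ ℂ^m whose (i,j)-th elements are φ_i ⊗ η_j and φ'_i ⊗ η'_j respectively. Then ‖β₁ ⊗ γ₁ − β₂ ⊗ γ₂‖_B ≤ ‖β₁ − β₂‖_B + ‖γ₁ − γ₂‖_B. -/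
noncomputable section
open scoped BigOperators Classical ComplexOrder

/-- The trace norm `‖M‖₁ = tr √(MᴴM)` of a complex square matrix. -/
def traceNorm {I : Type*} [Fintype I] [DecidableEq I] (M : Matrix I I ℂ) : ℝ :=
  (((Matrix.posSemidef_conjTranspose_mul_self M).1.eigenvectorUnitary : Matrix I I ℂ) *
    Matrix.diagonal ((fun x : ℝ => (x : ℂ)) ∘ Real.sqrt ∘
      (Matrix.posSemidef_conjTranspose_mul_self M).1.eigenvalues) *
    star ((Matrix.posSemidef_conjTranspose_mul_self M).1.eigenvectorUnitary : Matrix I I ℂ)).trace.re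

/-- The rank-one outer product `|u⟩⟨u| = u u†` of a vector. -/
def outer {I : Type*} [Fintype I] (u : EuclideanSpace ℂ I) : Matrix I I ℂ :=
  Matrix.of fun i j => u i * (starRingEnd ℂ) (u j)

/-- The basis norm `‖β − γ‖_B = max_i ‖|βᵢ⟩⟨βᵢ| − |γᵢ⟩⟨γᵢ|‖₁` between two ordered
families of vectors with the same index set. -/
def basisNorm {I J : Type*} [Fintype J] [DecidableEq J]
    (β γ : I → EuclideanSpace ℂ J) : ℝ :=
  ⨆ i, traceNorm (outer (β i) - outer (γ i))

/-- The Kronecker (tensor) product of two vectors. -/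
def tensorVec {n m : ℕ} (φ : EuclideanSpace ℂ (Fin n)) (η : EuclideanSpace ℂ (Fin m)) :
    EuclideanSpace ℂ (Fin n × Fin m) :=
  WithLp.toLp 2 (fun p : Fin n × Fin m => φ p.1 * η p.2)

section Aux
open Matrix

variable {I : Type*} [Fintype I]

/-- General rank-one matrix `|u⟩⟨v|`. -/
def ov (u v : EuclideanSpace ℂ I) : Matrix I I ℂ :=
  Matrix.of fun i j => u i * (starRingEnd ℂ) (v j)

lemma ov_mul (a b c d : EuclideanSpace ℂ I) :
    ov a b * ov c d = (inner ℂ b c : ℂ) • ov a d := by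
  ext i j
  simp only [ov, Matrix.mul_apply, Matrix.of_apply, Matrix.smul_apply, PiLp.inner_apply,
    RCLike.inner_apply, smul_eq_mul, Finset.sum_mul]
  exact Finset.sum_congr rfl fun k _ => by ring

lemma ov_herm (u : EuclideanSpace ℂ I) : (ov u u)ᴴ = ov u u := by
  ext i j
  simp [ov, Matrix.conjTranspose_apply, mul_comm]

lemma ov_trace [DecidableEq I] (u v : EuclideanSpace ℂ I) :
    (ov u v).trace = (inner ℂ v u : ℂ) := by
  simp [ov, Matrix.trace, Matrix.diag, PiLp.inner_apply, RCLike.inner_apply, mul_comm]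

lemma M2_eq (u v : EuclideanSpace ℂ I)
    (hu : (inner ℂ u u : ℂ) = 1) (hv : (inner ℂ v v : ℂ) = 1) :
    (ov u u - ov v v) * (ov u u - ov v v) =
      ov u u + ov v v - (inner ℂ u v : ℂ) • ov u v - (inner ℂ v u : ℂ) • ov v u := by
  simp only [sub_mul, mul_sub, ov_mul, hu, hv, one_smul]
  module

lemma M4_eq (u v : EuclideanSpace ℂ I)
    (hu : (inner ℂ u u : ℂ) = 1) (hv : (inner ℂ v v : ℂ) = 1) :
    ((ov u u - ov v v) * (ov u u - ov v v)) * ((ov u u - ov v v) * (ov u u - ov v v)) =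
      (1 - (inner ℂ u v : ℂ) * (inner ℂ v u : ℂ)) • ((ov u u - ov v v) * (ov u u - ov v v)) := by
  rw [M2_eq u v hu hv]
  simp only [sub_mul, mul_sub, add_mul, mul_add, smul_mul_assoc, mul_smul_comm, ov_mul, hu, hv,
    one_smul, smul_smul, inner_conj_symm]
  module

lemma traceNorm_eq_of_sq [DecidableEq I] (M : Matrix I I ℂ) (t : ℝ) (ht : 0 ≤ t)
    (h : (Mᴴ * M) * (Mᴴ * M) = (t : ℂ) • (Mᴴ * M)) :
    traceNorm M = ((((Real.sqrt t)⁻¹ : ℝ) : ℂ) • (Mᴴ * M)).trace.re := by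
  rw [traceNorm]
  set hA := (Matrix.posSemidef_conjTranspose_mul_self M).1 with hAdef
  set U : Matrix I I ℂ := (hA.eigenvectorUnitary : Matrix I I ℂ) with hU
  set D : Matrix I I ℂ := Matrix.diagonal ((fun x : ℝ => (x : ℂ)) ∘ hA.eigenvalues) with hD
  have hspec : Mᴴ * M = U * D * star U := by
    have h0 := hA.spectral_theorem
    rw [Unitary.conjStarAlgAut_apply] at h0
    exact h0
  have hUU : star U * U = 1 := Matrix.mem_unitaryGroup_iff'.1 hA.eigenvectorUnitary.2
  have key : ∀ X : Matrix I I ℂ, star U * (U * X * star U) * U = X := by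
    intro X
    rw [show star U * (U * X * star U) * U = (star U * U) * X * (star U * U) by
      simp only [Matrix.mul_assoc]]
    rw [hUU, Matrix.one_mul, Matrix.mul_one]
  have hAA : (Mᴴ * M) * (Mᴴ * M) = U * (D * D) * star U := by
    rw [hspec, show U * D * star U * (U * D * star U) = U * D * (star U * U) * D * star U by
      simp only [Matrix.mul_assoc], hUU, Matrix.mul_one]
    simp only [Matrix.mul_assoc]
  have hDD : D * D = (t : ℂ) • D := by
    rw [← key (D * D), ← hAA, h, hspec, Matrix.mul_smul, Matrix.smul_mul, key]
  have hl : ∀ i, hA.eigenvalues i * hA.eigenvalues i = t * hA.eigenvalues i := by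
    intro i
    have := congrFun (congrFun hDD i) i
    simp only [hD, Matrix.diagonal_mul_diagonal, Matrix.smul_apply, Matrix.diagonal_apply_eq,
      Function.comp_apply, smul_eq_mul] at this
    exact_mod_cast this
  have hsq : ∀ i, Real.sqrt (hA.eigenvalues i) = (Real.sqrt t)⁻¹ * hA.eigenvalues i := by
    intro i
    rcases mul_eq_mul_right_iff.1 (hl i) with h1 | h1
    · rw [h1]
      rcases ht.eq_or_lt with h0 | h0
      · rw [← h0]; simp
      · have hs := Real.sqrt_pos.2 h0
        rw [eq_inv_mul_iff_mul_eq₀ hs.ne', Real.mul_self_sqrt ht]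
    · rw [h1]; simp
  have hdiag : Matrix.diagonal ((fun x : ℝ => (x : ℂ)) ∘ Real.sqrt ∘ hA.eigenvalues) =
      (((Real.sqrt t)⁻¹ : ℝ) : ℂ) • D := by
    ext i j
    by_cases hij : i = j
    · subst hij; simp [hD, hsq]
    · simp [hD, Matrix.diagonal_apply_ne _ hij]
  rw [hdiag, Matrix.mul_smul, Matrix.smul_mul, ← hspec]

/-- For unit vectors, `‖ |u⟩⟨u| − |v⟩⟨v| ‖₁ = 2 √(1 − |⟨u,v⟩|²)`. -/
lemma traceNorm_outer_sub [DecidableEq I] (u v : EuclideanSpace ℂ I)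
    (hu : ‖u‖ = 1) (hv : ‖v‖ = 1) :
    traceNorm (outer u - outer v) = 2 * Real.sqrt (1 - ‖(inner ℂ u v : ℂ)‖ ^ 2) := by
  have houter : outer u - outer v = ov u u - ov v v := rfl
  set M := ov u u - ov v v with hMdef
  have hMherm : Mᴴ = M := by rw [hMdef, conjTranspose_sub, ov_herm, ov_herm]
  have huu : (inner ℂ u u : ℂ) = 1 := by
    rw [inner_self_eq_norm_sq_to_K, hu]; norm_num
  have hvv : (inner ℂ v v : ℂ) = 1 := by
    rw [inner_self_eq_norm_sq_to_K, hv]; norm_num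
  set c : ℂ := (inner ℂ u v : ℂ) with hcdef
  have hvu : (inner ℂ v u : ℂ) = starRingEnd ℂ c := by rw [hcdef, inner_conj_symm]
  have hcc : c * starRingEnd ℂ c = ((‖c‖ ^ 2 : ℝ) : ℂ) := by
    rw [Complex.mul_conj, Complex.normSq_eq_norm_sq]
  set t : ℝ := 1 - ‖c‖ ^ 2 with htdef
  have hc1 : ‖c‖ ≤ 1 := by
    simpa [hu, hv] using norm_inner_le_norm (𝕜 := ℂ) u v
  have ht0 : 0 ≤ t := by
    have : ‖c‖ ^ 2 ≤ 1 := by nlinarith [norm_nonneg c]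
    linarith
  have htC : (1 : ℂ) - c * starRingEnd ℂ c = ((t : ℝ) : ℂ) := by
    rw [hcc]; push_cast [htdef]; ring
  rw [houter]
  by_cases hts : t = 0
  · -- degenerate case : u, v parallel
    have hc : ‖c‖ = 1 := by nlinarith [norm_nonneg c]
    have hu0 : u ≠ 0 := fun h => by simp [h] at hu
    have hv0 : v ≠ 0 := fun h => by simp [h] at hv
    obtain ⟨r, hr0, hrv⟩ := (norm_inner_eq_norm_iff hu0 hv0).1 (by rw [← hcdef, hc, hu, hv]; ring)
    have hrn : r * starRingEnd ℂ r = 1 := by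
      have : ‖v‖ = ‖r‖ * ‖u‖ := by rw [hrv, norm_smul]
      rw [hu, hv, mul_one] at this
      rw [Complex.mul_conj, Complex.normSq_eq_norm_sq, ← this]
      norm_num
    have hM0 : M = 0 := by
      rw [hMdef]
      ext i j
      simp only [Matrix.sub_apply, ov, Matrix.of_apply, Matrix.zero_apply, hrv, PiLp.smul_apply,
        smul_eq_mul]
      rw [_root_.map_mul (starRingEnd ℂ)]
      linear_combination (-(u i * (starRingEnd ℂ) (u j))) * hrn
    have hsq : traceNorm M = (0 : Matrix I I ℂ).trace.re := by
      rw [traceNorm_eq_of_sq M 0 le_rfl (by simp [hM0])]; simp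
    rw [hsq]
    simp only [trace_zero, Complex.zero_re]
    rw [hts, Real.sqrt_zero]
    ring
  · have htpos : 0 < t := lt_of_le_of_ne ht0 (Ne.symm hts)
    have hspos : 0 < Real.sqrt t := Real.sqrt_pos.2 htpos
    set s : ℝ := Real.sqrt t with hsdef
    have hss : s * s = t := Real.mul_self_sqrt ht0
    set Q : Matrix I I ℂ := ((s⁻¹ : ℝ) : ℂ) • (M * M) with hQdef
    have hQpsd : Q.PosSemidef := by
      set r : ℝ := Real.sqrt s⁻¹ with hrdef
      have hr : ((r : ℂ)) * ((r : ℂ)) = ((s⁻¹ : ℝ) : ℂ) := by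
        rw [← Complex.ofReal_mul, Real.mul_self_sqrt (inv_nonneg.2 hspos.le)]
      have h1 : ((r : ℂ) • M)ᴴ * ((r : ℂ) • M) = Q := by
        rw [conjTranspose_smul, hMherm, smul_mul_assoc, mul_smul_comm, smul_smul,
          Complex.star_def, Complex.conj_ofReal, hr, hQdef]
      exact h1 ▸ Matrix.posSemidef_conjTranspose_mul_self ((r : ℂ) • M)
    have hQ2 : Q ^ 2 = Mᴴ * M := by
      rw [hMherm, pow_two, hQdef, smul_mul_assoc, mul_smul_comm, smul_smul, hMdef,
        M4_eq u v huu hvv, ← hcdef, hvu, htC, smul_smul, ← Complex.ofReal_mul,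
        ← Complex.ofReal_mul]
      rw [show s⁻¹ * s⁻¹ * t = 1 by rw [← hss]; field_simp]
      simp
    have heq : traceNorm M = Q.trace.re := by
      rw [traceNorm_eq_of_sq M t ht0 (by
        rw [hMherm, hMdef, M4_eq u v huu hvv, ← hcdef, hvu, htC]), hMherm, hQdef]
    rw [heq]
    have htr : (M * M).trace = ((2 * t : ℝ) : ℂ) := by
      rw [hMdef, M2_eq u v huu hvv, trace_sub, trace_sub, trace_add, trace_smul,
        trace_smul, ov_trace, ov_trace, huu, hvv, smul_eq_mul, smul_eq_mul, ← hcdef]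
      rw [ov_trace, ov_trace, hvu, ← hcdef, mul_comm (starRingEnd ℂ c) c, hcc]
      push_cast [htdef]
      ring
    rw [hQdef, trace_smul, smul_eq_mul, htr, ← Complex.ofReal_mul, Complex.ofReal_re]
    rw [show s⁻¹ * (2 * t) = 2 * s by field_simp [← hss]; rw [← hss]; ring]

end Aux

lemma inner_tensorVec {n m : ℕ} (a c : EuclideanSpace ℂ (Fin n)) (b d : EuclideanSpace ℂ (Fin m)) :
    (inner ℂ (tensorVec a b) (tensorVec c d) : ℂ) = (inner ℂ a c : ℂ) * (inner ℂ b d : ℂ) := by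
  simp only [PiLp.inner_apply, RCLike.inner_apply, tensorVec, PiLp.toLp_apply]
  rw [Finset.sum_mul_sum, ← Finset.sum_product']
  rw [show (Finset.univ ×ˢ Finset.univ : Finset (Fin n × Fin m)) = Finset.univ from rfl]
  exact Finset.sum_congr rfl fun p _ => by simp [map_mul]; ring

lemma norm_tensorVec {n m : ℕ} (a : EuclideanSpace ℂ (Fin n)) (b : EuclideanSpace ℂ (Fin m))
    (ha : ‖a‖ = 1) (hb : ‖b‖ = 1) : ‖tensorVec a b‖ = 1 := by
  have h : (inner ℂ (tensorVec a b) (tensorVec a b) : ℂ) = 1 := by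
    rw [inner_tensorVec, inner_self_eq_norm_sq_to_K, inner_self_eq_norm_sq_to_K, ha, hb]
    norm_num
  have h2 : ‖tensorVec a b‖ ^ 2 = 1 := by
    rw [norm_sq_eq_re_inner (𝕜 := ℂ), h]
    simp
  nlinarith [norm_nonneg (tensorVec a b)]

lemma scalar_ineq (x y : ℝ) (hx0 : 0 ≤ x) (hx1 : x ≤ 1) (hy0 : 0 ≤ y) (hy1 : y ≤ 1) :
    2 * Real.sqrt (1 - (x * y) ^ 2) ≤ 2 * Real.sqrt (1 - x ^ 2) + 2 * Real.sqrt (1 - y ^ 2) := by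
  have hx2 : (0:ℝ) ≤ 1 - x ^ 2 := by nlinarith
  have hy2 : (0:ℝ) ≤ 1 - y ^ 2 := by nlinarith
  have h1 : Real.sqrt (1 - (x * y) ^ 2) ≤ Real.sqrt ((1 - x ^ 2) + (1 - y ^ 2)) :=
    Real.sqrt_le_sqrt (by nlinarith [mul_nonneg hx2 hy2])
  have h2 : Real.sqrt ((1 - x ^ 2) + (1 - y ^ 2)) ≤
      Real.sqrt (1 - x ^ 2) + Real.sqrt (1 - y ^ 2) := by
    have h3 := Real.sqrt_le_sqrt (show (1 - x ^ 2) + (1 - y ^ 2) ≤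
        (Real.sqrt (1 - x ^ 2) + Real.sqrt (1 - y ^ 2)) ^ 2 by
      nlinarith [Real.sq_sqrt hx2, Real.sq_sqrt hy2, Real.sqrt_nonneg (1 - x ^ 2),
        Real.sqrt_nonneg (1 - y ^ 2)])
    rwa [Real.sqrt_sq (by positivity)] at h3
  linarith

theorem basisNorm_tensor_le (n m : ℕ)
    (β₁ β₂ : Fin n → EuclideanSpace ℂ (Fin n))
    (γ₁ γ₂ : Fin m → EuclideanSpace ℂ (Fin m))
    (hβ₁ : Orthonormal ℂ β₁) (hβ₂ : Orthonormal ℂ β₂)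
    (hγ₁ : Orthonormal ℂ γ₁) (hγ₂ : Orthonormal ℂ γ₂) :
    basisNorm (fun p : Fin n × Fin m => tensorVec (β₁ p.1) (γ₁ p.2))
        (fun p : Fin n × Fin m => tensorVec (β₂ p.1) (γ₂ p.2)) ≤
      basisNorm β₁ β₂ + basisNorm γ₁ γ₂ := by
  have hβnorm : 0 ≤ basisNorm β₁ β₂ := Real.iSup_nonneg fun i => by
    rw [traceNorm_outer_sub _ _ (hβ₁.1 i) (hβ₂.1 i)]
    positivity
  have hγnorm : 0 ≤ basisNorm γ₁ γ₂ := Real.iSup_nonneg fun j => by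
    rw [traceNorm_outer_sub _ _ (hγ₁.1 j) (hγ₂.1 j)]
    positivity
  by_cases hE : Nonempty (Fin n × Fin m)
  · have hn : Nonempty (Fin n) := ⟨hE.some.1⟩
    have hm : Nonempty (Fin m) := ⟨hE.some.2⟩
    rw [basisNorm]
    apply ciSup_le
    intro p
    obtain ⟨i, j⟩ := p
    have hT1 : ‖tensorVec (β₁ i) (γ₁ j)‖ = 1 := norm_tensorVec _ _ (hβ₁.1 i) (hγ₁.1 j)
    have hT2 : ‖tensorVec (β₂ i) (γ₂ j)‖ = 1 := norm_tensorVec _ _ (hβ₂.1 i) (hγ₂.1 j)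
    rw [traceNorm_outer_sub _ _ hT1 hT2, inner_tensorVec, norm_mul]
    have ha1 : ‖(inner ℂ (β₁ i) (β₂ i) : ℂ)‖ ≤ 1 := by
      simpa [hβ₁.1 i, hβ₂.1 i] using norm_inner_le_norm (𝕜 := ℂ) (β₁ i) (β₂ i)
    have hb1 : ‖(inner ℂ (γ₁ j) (γ₂ j) : ℂ)‖ ≤ 1 := by
      simpa [hγ₁.1 j, hγ₂.1 j] using norm_inner_le_norm (𝕜 := ℂ) (γ₁ j) (γ₂ j)
    have step := scalar_ineq ‖(inner ℂ (β₁ i) (β₂ i) : ℂ)‖ ‖(inner ℂ (γ₁ j) (γ₂ j) : ℂ)‖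
      (norm_nonneg _) ha1 (norm_nonneg _) hb1
    refine step.trans (add_le_add ?_ ?_)
    · rw [← traceNorm_outer_sub _ _ (hβ₁.1 i) (hβ₂.1 i), basisNorm]
      exact le_ciSup (Set.Finite.bddAbove (Set.finite_range
        (fun i => traceNorm (outer (β₁ i) - outer (β₂ i))))) i
    · rw [← traceNorm_outer_sub _ _ (hγ₁.1 j) (hγ₂.1 j), basisNorm]
      exact le_ciSup (Set.Finite.bddAbove (Set.finite_range
        (fun j => traceNorm (outer (γ₁ j) - outer (γ₂ j))))) j
  · rw [not_nonempty_iff] at hE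
    rw [basisNorm, Real.iSup_of_isEmpty]
    linarith
end
end

section
/- Fix integers N_A ≥ 1 and N_B ≥ 2 with N_B even, and set d_A = 2^{N_A}, d_B = 2^{N_B}. For every unit vector v ∈ ℂ^{({0,1}^{N_A})} and all unit vectors Ψ, Ψ' ∈ ℂ^{({0,1}^{N_A})} ⊗ ℂ^{({0,1}^{N_B})}, the inequality |F_v(Ψ) − F_v(Ψ')| ≤ (4√2 + 2)‖Ψ − Ψ'‖₂ holds, where ‖·‖₂ is the Hilbert-space norm. -/
noncomputable section
open scoped BigOperators Classical ComplexConjugate ComplexOrder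

/-- Vectors of an `n`-qubit system, as functions on bitstrings. -/
abbrev QVec (n : ℕ) := (Fin n → Bool) → ℂ

/-- Vectors of a bipartite `(nA + nB)`-qubit system. -/
abbrev QState (nA nB : ℕ) := ((Fin nA → Bool) × (Fin nB → Bool)) → ℂ

/-- The standard inner product, conjugate-linear in the first argument. -/
def qInner {I : Type*} [Fintype I] (ψ φ : I → ℂ) : ℂ :=
  ∑ x, (starRingEnd ℂ) (ψ x) * φ x

/-- The Hilbert-space (Euclidean) norm. -/
def qNorm {I : Type*} [Fintype I] (ψ : I → ℂ) : ℝ :=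
  Real.sqrt (qInner ψ ψ).re

/-- The spin-flipped vector `ψ̃ = σ_y^{⊗n} ψ̄`. -/
def spinFlip {n : ℕ} (ψ : QVec n) : QVec n :=
  fun x => ∑ y, (∏ k, sigmaY (x k) (y k)) * (starRingEnd ℂ) (ψ y)

/-- The (unnormalized) post-measurement vector `P_v(Ψ)` on the `B` system. -/
def Pv {nA nB : ℕ} (v : QVec nA) (Ψ : QState nA nB) : QVec nB :=
  fun b => ∑ a, (starRingEnd ℂ) (v a) * Ψ (a, b)

/-- `F_v(Ψ) = |⟨P_v(Ψ), P̃_v(Ψ)⟩|`. -/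
def Fv {nA nB : ℕ} (v : QVec nA) (Ψ : QState nA nB) : ℝ :=
  ‖qInner (Pv v Ψ) (spinFlip (Pv v Ψ))‖

lemma qInner_eq_inner {I : Type*} [Fintype I] (ψ φ : I → ℂ) :
    qInner ψ φ = inner (𝕜 := ℂ) ((WithLp.equiv 2 (I → ℂ)).symm ψ) ((WithLp.equiv 2 (I → ℂ)).symm φ) := by
  simp [qInner, PiLp.inner_apply, RCLike.inner_apply]
  exact Finset.sum_congr rfl fun _ _ => mul_comm _ _

lemma qNorm_eq_norm {I : Type*} [Fintype I] (ψ : I → ℂ) :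
    qNorm ψ = ‖(WithLp.equiv 2 (I → ℂ)).symm ψ‖ := by
  rw [qNorm, qInner_eq_inner]
  rw [← RCLike.re_to_complex, inner_self_eq_norm_sq, Real.sqrt_sq (norm_nonneg _)]

lemma qNorm_nonneg {I : Type*} [Fintype I] (ψ : I → ℂ) : 0 ≤ qNorm ψ :=
  Real.sqrt_nonneg _

lemma qNorm_sq {I : Type*} [Fintype I] (ψ : I → ℂ) :
    qNorm ψ ^ 2 = ∑ x, ‖ψ x‖ ^ 2 := by
  rw [qNorm_eq_norm, EuclideanSpace.norm_eq, Real.sq_sqrt (by positivity)]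
  simp [Real.sq_sqrt]

lemma qAbs_inner_le {I : Type*} [Fintype I] (ψ φ : I → ℂ) :
    ‖qInner ψ φ‖ ≤ qNorm ψ * qNorm φ := by
  rw [qInner_eq_inner, qNorm_eq_norm, qNorm_eq_norm]
  exact norm_inner_le_norm _ _

lemma qInner_sub_left {I : Type*} [Fintype I] (ψ ψ' φ : I → ℂ) :
    qInner (ψ - ψ') φ = qInner ψ φ - qInner ψ' φ := by
  simp [qInner, sub_mul, Finset.sum_sub_distrib]

lemma qInner_sub_right {I : Type*} [Fintype I] (ψ φ φ' : I → ℂ) :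
    qInner ψ (φ - φ') = qInner ψ φ - qInner ψ φ' := by
  simp [qInner, mul_sub, Finset.sum_sub_distrib]

lemma Pv_sub {nA nB : ℕ} (v : QVec nA) (Ψ Ψ' : QState nA nB) :
    Pv v (Ψ - Ψ') = Pv v Ψ - Pv v Ψ' := by
  funext b
  simp [Pv, mul_sub, Finset.sum_sub_distrib]

lemma spinFlip_sub {n : ℕ} (ψ φ : QVec n) :
    spinFlip (ψ - φ) = spinFlip ψ - spinFlip φ := by
  funext x
  simp [spinFlip, mul_sub, Finset.sum_sub_distrib]

lemma spinFlip_apply {n : ℕ} (ψ : QVec n) (x : Fin n → Bool) :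
    spinFlip ψ x = (∏ k, sigmaY (x k) (!(x k))) * (starRingEnd ℂ) (ψ (fun k => !(x k))) := by
  rw [spinFlip, Finset.sum_eq_single (fun k => !(x k))]
  · intro y _ hy
    have : ∃ k, y k = x k := by
      by_contra h
      push_neg at h
      exact hy (funext fun k => by
        have hk := h k
        cases hxk : x k <;> cases hyk : y k <;> simp_all)
    obtain ⟨k, hk⟩ := this
    rw [Finset.prod_eq_zero (Finset.mem_univ k) (by simp [sigmaY, hk]), zero_mul]
  · simp

lemma norm_spinFlip_apply {n : ℕ} (ψ : QVec n) (x : Fin n → Bool) :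
    ‖spinFlip ψ x‖ = ‖ψ (fun k => !(x k))‖ := by
  rw [spinFlip_apply, norm_mul, norm_prod]
  have : ∀ k : Fin n, ‖sigmaY (x k) (!(x k))‖ = 1 := by
    intro k; cases h : x k <;> simp [sigmaY]
  simp [this]

lemma qNorm_spinFlip {n : ℕ} (ψ : QVec n) : qNorm (spinFlip ψ) = qNorm ψ := by
  have h : qNorm (spinFlip ψ) ^ 2 = qNorm ψ ^ 2 := by
    rw [qNorm_sq, qNorm_sq]
    exact Fintype.sum_equiv ((Function.Involutive.toPerm (fun x : Fin n → Bool => fun k => !(x k))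
      (fun x => by funext k; simp))) _ _ (fun x => by rw [norm_spinFlip_apply]; rfl)
  rw [← Real.sqrt_sq (qNorm_nonneg (spinFlip ψ)), ← Real.sqrt_sq (qNorm_nonneg ψ), h]

lemma qNorm_Pv_le {nA nB : ℕ} (v : QVec nA) (hv : qNorm v = 1) (Ψ : QState nA nB) :
    qNorm (Pv v Ψ) ≤ qNorm Ψ := by
  have hsq : qNorm (Pv v Ψ) ^ 2 ≤ qNorm Ψ ^ 2 := by
    rw [qNorm_sq, qNorm_sq, Fintype.sum_prod_type, Finset.sum_comm]
    refine Finset.sum_le_sum fun b _ => ?_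
    have h1 : ‖Pv v Ψ b‖ ≤ qNorm (fun a => Ψ (a, b)) := by
      have := qAbs_inner_le v (fun a => Ψ (a, b))
      rw [hv, one_mul] at this
      simpa [Pv, qInner] using this
    calc ‖Pv v Ψ b‖ ^ 2 ≤ qNorm (fun a => Ψ (a, b)) ^ 2 := by
          nlinarith [norm_nonneg (Pv v Ψ b), qNorm_nonneg (fun a => Ψ (a, b))]
      _ = ∑ a, ‖Ψ (a, b)‖ ^ 2 := qNorm_sq _
  rw [← Real.sqrt_sq (qNorm_nonneg (Pv v Ψ)), ← Real.sqrt_sq (qNorm_nonneg Ψ)]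
  exact Real.sqrt_le_sqrt hsq

theorem Fv_lipschitz_in_state
    (NA NB : ℕ) (hNA : 1 ≤ NA) (hNB : 2 ≤ NB) (hNBeven : Even NB)
    (v : QVec NA) (hv : qNorm v = 1)
    (Ψ Ψ' : QState NA NB) (hΨ : qNorm Ψ = 1) (hΨ' : qNorm Ψ' = 1) :
    |Fv v Ψ - Fv v Ψ'| ≤ (4 * Real.sqrt 2 + 2) * qNorm (Ψ - Ψ') := by
  set P := Pv v Ψ with hP
  set P' := Pv v Ψ' with hP'
  have hPD : Pv v (Ψ - Ψ') = P - P' := Pv_sub v Ψ Ψ'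
  have hPle : qNorm P ≤ 1 := le_of_le_of_eq (qNorm_Pv_le v hv Ψ) hΨ
  have hP'le : qNorm P' ≤ 1 := le_of_le_of_eq (qNorm_Pv_le v hv Ψ') hΨ'
  have hDle : qNorm (P - P') ≤ qNorm (Ψ - Ψ') := hPD ▸ qNorm_Pv_le v hv (Ψ - Ψ')
  have split : qInner P (spinFlip P) - qInner P' (spinFlip P') =
      qInner (P - P') (spinFlip P) + qInner P' (spinFlip (P - P')) := by
    rw [spinFlip_sub, qInner_sub_left, qInner_sub_right]; ring
  have key : |Fv v Ψ - Fv v Ψ'| ≤ 2 * qNorm (Ψ - Ψ') := by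
    calc |Fv v Ψ - Fv v Ψ'|
        ≤ ‖qInner P (spinFlip P) - qInner P' (spinFlip P')‖ := by
          simp only [Fv, ← hP, ← hP']
          exact abs_norm_sub_norm_le _ _
      _ ≤ ‖qInner (P - P') (spinFlip P)‖ + ‖qInner P' (spinFlip (P - P'))‖ := by
          rw [split]; exact norm_add_le _ _
      _ ≤ qNorm (P - P') * qNorm (spinFlip P) + qNorm P' * qNorm (spinFlip (P - P')) := by
          refine add_le_add ?_ ?_ <;>
            · exact qAbs_inner_le _ _
      _ = qNorm (P - P') * qNorm P + qNorm P' * qNorm (P - P') := by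
          rw [qNorm_spinFlip, qNorm_spinFlip]
      _ ≤ qNorm (P - P') * 1 + 1 * qNorm (P - P') := by
          refine add_le_add ?_ ?_
          · exact mul_le_mul_of_nonneg_left hPle (qNorm_nonneg _)
          · exact mul_le_mul_of_nonneg_right hP'le (qNorm_nonneg _)
      _ = 2 * qNorm (P - P') := by ring
      _ ≤ 2 * qNorm (Ψ - Ψ') := by linarith
  have h2 : (2 : ℝ) ≤ 4 * Real.sqrt 2 + 2 := by
    nlinarith [Real.sqrt_nonneg 2]
  calc |Fv v Ψ - Fv v Ψ'| ≤ 2 * qNorm (Ψ - Ψ') := key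
    _ ≤ (4 * Real.sqrt 2 + 2) * qNorm (Ψ - Ψ') :=
        mul_le_mul_of_nonneg_right h2 (qNorm_nonneg _)
end
end

section
/- Let ε, δ > 0 be arbitrary and fix an integer N_A ≥ 1 with d_A = 2^{N_A}. Then there exists N₀ ∈ ℕ such that for every even integer N_B ≥ N₀ (with d_B = 2^{N_B} and K := √(2/(d_B + 1))), Pr_{Ψ ∼ μ_H}( L^τ_global(Ψ) ≥ K + ε ) ≤ δ. -/
noncomputable section
open scoped BigOperators Classical ComplexConjugate ComplexOrder
open MeasureTheory

/-- `β` is an (ordered) orthonormal basis of `ℂ^{{0,1}^{nA}}`. -/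
def ONB {nA : ℕ} (β : (Fin nA → Bool) → QVec nA) : Prop :=
  ∀ i j, qInner (β i) (β j) = if i = j then 1 else 0

/-- The average post-measurement `n`-tangle `τ̄_β(Ψ) = ∑ᵢ F_{βᵢ}(Ψ)`. -/
def tauBar {nA nB : ℕ} (β : (Fin nA → Bool) → QVec nA) (Ψ : QState nA nB) : ℝ :=
  ∑ i, Fv (β i) Ψ

/-- The entanglement of assistance: supremum of `τ̄_β(Ψ)` over orthonormal bases `β`. -/
def LtauGlobal {nA nB : ℕ} (Ψ : QState nA nB) : ℝ :=
  sSup {t : ℝ | ∃ β, ONB β ∧ t = tauBar β Ψ}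

open MeasureTheory in
/-- `μ` is the Haar-uniform measure on the unit sphere of the bipartite state
space: a unitarily invariant probability measure giving full measure to the
unit vectors.  (These properties determine the measure `μ_H` uniquely.) -/
def IsHaarUniform {nA nB : ℕ} (μ : Measure (QState nA nB)) : Prop :=
  IsProbabilityMeasure μ ∧
  μ {Ψ | qNorm Ψ = 1} = 1 ∧
  ∀ U : QState nA nB →ₗ[ℂ] QState nA nB,
    (∀ ψ φ : QState nA nB, qInner (U ψ) (U φ) = qInner ψ φ) →
      μ.map U = μ

namespace LTG

lemma sum_swap4 {α β γ δ M : Type*} [Fintype α] [Fintype β] [Fintype γ] [Fintype δ]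
    [AddCommMonoid M] (f : α → β → γ → δ → M) :
    ∑ a, ∑ b, ∑ c, ∑ d, f a b c d = ∑ c, ∑ d, ∑ a, ∑ b, f a b c d :=
  calc ∑ a, ∑ b, ∑ c, ∑ d, f a b c d
      = ∑ a, ∑ c, ∑ b, ∑ d, f a b c d :=
        Finset.sum_congr rfl fun _ _ => Finset.sum_comm
    _ = ∑ c, ∑ a, ∑ b, ∑ d, f a b c d := Finset.sum_comm
    _ = ∑ c, ∑ a, ∑ d, ∑ b, f a b c d :=
        Finset.sum_congr rfl fun _ _ => Finset.sum_congr rfl fun _ _ => Finset.sum_comm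
    _ = ∑ c, ∑ d, ∑ a, ∑ b, f a b c d :=
        Finset.sum_congr rfl fun _ _ => Finset.sum_comm

lemma quad_form_eq {I J : Type*} [Fintype I] [Fintype J] (M : J → J → ℂ) (v : I → ℂ)
    (ψ : I → J → ℂ) (P : J → ℂ) (hP : ∀ b, P b = ∑ a, v a * ψ a b) :
    (∑ b, P b * ∑ b', M b b' * P b') =
      ∑ a, ∑ a', v a * v a' * ∑ b, ∑ b', M b b' * ψ a b * ψ a' b' := by
  have h1 : ∀ a a', v a * v a' * ∑ b, ∑ b', M b b' * ψ a b * ψ a' b'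
      = ∑ b, ∑ b', M b b' * (v a * ψ a b) * (v a' * ψ a' b') := by
    intro a a'
    rw [Finset.mul_sum]
    refine Finset.sum_congr rfl fun b _ => ?_
    rw [Finset.mul_sum]
    exact Finset.sum_congr rfl fun b' _ => by ring
  simp only [h1]
  rw [sum_swap4]
  refine Finset.sum_congr rfl fun b _ => ?_
  calc P b * ∑ b', M b b' * P b' = ∑ b', M b b' * P b * P b' := by
        rw [Finset.mul_sum]; exact Finset.sum_congr rfl fun b' _ => by ring
    _ = ∑ b', ∑ a, ∑ a', M b b' * (v a * ψ a b) * (v a' * ψ a' b') := by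
        refine Finset.sum_congr rfl fun b' _ => ?_
        rw [hP b, hP b', mul_assoc, Finset.sum_mul_sum, Finset.mul_sum]
        refine Finset.sum_congr rfl fun a _ => ?_
        rw [Finset.mul_sum]
        exact Finset.sum_congr rfl fun a' _ => by ring

variable {nA nB : ℕ}

/-- The matrix of the σ_y tensor product. -/
def MM {nB : ℕ} (b b' : Fin nB → Bool) : ℂ := ∏ k, sigmaY (b k) (b' k)

/-- The symmetric matrix `T` with `F_v = |vᵀ T v|`. -/
def TT {nA nB : ℕ} (Ψ : QState nA nB) (a a' : Fin nA → Bool) : ℂ :=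
  ∑ b, ∑ b', MM b b' * (starRingEnd ℂ) (Ψ (a, b)) * (starRingEnd ℂ) (Ψ (a', b'))

lemma conj_Pv (v : QVec nA) (Ψ : QState nA nB) (b : Fin nB → Bool) :
    (starRingEnd ℂ) (Pv v Ψ b) = ∑ a, v a * (starRingEnd ℂ) (Ψ (a, b)) := by
  simp [Pv, map_sum, map_mul, Complex.conj_conj]

lemma qInner_Pv_spinFlip (v : QVec nA) (Ψ : QState nA nB) :
    qInner (Pv v Ψ) (spinFlip (Pv v Ψ)) = ∑ a, ∑ a', v a * v a' * TT Ψ a a' := by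
  have h := quad_form_eq (MM (nB := nB)) v (fun a b => (starRingEnd ℂ) (Ψ (a, b)))
    (fun b => (starRingEnd ℂ) (Pv v Ψ b)) (conj_Pv v Ψ)
  calc qInner (Pv v Ψ) (spinFlip (Pv v Ψ))
      = ∑ b, (starRingEnd ℂ) (Pv v Ψ b) * ∑ b', MM b b' * (starRingEnd ℂ) (Pv v Ψ b') := by
        unfold qInner spinFlip
        exact Finset.sum_congr rfl fun b _ => rfl
    _ = ∑ a, ∑ a', v a * v a' * TT Ψ a a' := h

lemma Fv_eq (v : QVec nA) (Ψ : QState nA nB) :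
    Fv v Ψ = ‖∑ a, ∑ a', v a * v a' * TT Ψ a a'‖ := by
  rw [Fv, qInner_Pv_spinFlip]

lemma parseval1C {I K : Type*} [Fintype I] [Fintype K] (β : I → I → ℂ)
    (hcomp : ∀ a c, ∑ i, β i a * (starRingEnd ℂ) (β i c) = if a = c then 1 else 0)
    (w : I → K → ℂ) :
    ∑ i, ∑ k, (∑ a, β i a * w a k) * (starRingEnd ℂ) (∑ a, β i a * w a k)
      = ∑ a, ∑ k, w a k * (starRingEnd ℂ) (w a k) := by
  rw [Finset.sum_comm]
  refine Eq.trans ?_ (Finset.sum_comm)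
  refine Finset.sum_congr rfl fun k _ => ?_
  calc ∑ i, (∑ a, β i a * w a k) * (starRingEnd ℂ) (∑ a, β i a * w a k)
      = ∑ i, ∑ a, ∑ c, (β i a * (starRingEnd ℂ) (β i c)) * (w a k * (starRingEnd ℂ) (w c k)) := by
        refine Finset.sum_congr rfl fun i _ => ?_
        rw [map_sum, Finset.sum_mul_sum]
        refine Finset.sum_congr rfl fun a _ => ?_
        simp only [map_mul]
        exact Finset.sum_congr rfl fun c _ => by ring
    _ = ∑ a, ∑ c, (∑ i, β i a * (starRingEnd ℂ) (β i c)) * (w a k * (starRingEnd ℂ) (w c k)) := by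
        rw [Finset.sum_comm]
        refine Finset.sum_congr rfl fun a _ => ?_
        rw [Finset.sum_comm]
        exact Finset.sum_congr rfl fun c _ => (Finset.sum_mul _ _ _).symm
    _ = ∑ a, w a k * (starRingEnd ℂ) (w a k) := by
        refine Finset.sum_congr rfl fun a _ => ?_
        simp only [hcomp]
        rw [Finset.sum_eq_single a]
        · simp
        · intro c _ hc; simp [Ne.symm hc]
        · intro h; exact absurd (Finset.mem_univ a) h

/-- Completeness relation for a square orthonormal family. -/
lemma ONB.complete {β : (Fin nA → Bool) → QVec nA} (hβ : ONB β) :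
    ∀ a c, ∑ i, β i a * (starRingEnd ℂ) (β i c) = if a = c then 1 else 0 := by
  classical
  set V : Matrix (Fin nA → Bool) (Fin nA → Bool) ℂ := Matrix.of (fun i a => β i a) with hV
  have h1 : V * V.conjTranspose = 1 := by
    ext i j
    simp only [Matrix.mul_apply, Matrix.conjTranspose_apply, hV, Matrix.of_apply]
    have hij := hβ i j
    unfold qInner at hij
    calc ∑ a, β i a * star (β j a)
        = (starRingEnd ℂ) (∑ a, (starRingEnd ℂ) (β i a) * β j a) := by
          rw [map_sum]; exact Finset.sum_congr rfl fun a _ => by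
            simp [mul_comm]
      _ = (starRingEnd ℂ) (if i = j then (1:ℂ) else 0) := by rw [hij]
      _ = if i = j then (1:ℂ) else 0 := by split <;> simp
      _ = (1 : Matrix _ _ ℂ) i j := by simp [Matrix.one_apply]
  have h2 : V.conjTranspose * V = 1 := mul_eq_one_comm.mp h1
  intro a c
  have := congrArg (fun m => m a c) h2
  simp only [Matrix.mul_apply, Matrix.conjTranspose_apply, hV, Matrix.of_apply,
    Matrix.one_apply] at this
  calc ∑ i, β i a * (starRingEnd ℂ) (β i c)
      = (starRingEnd ℂ) (∑ i, star (β i a) * β i c) := by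
        rw [map_sum]; exact Finset.sum_congr rfl fun i _ => by simp [mul_comm]
    _ = (starRingEnd ℂ) (if a = c then (1:ℂ) else 0) := by rw [this]
    _ = if a = c then 1 else 0 := by split <;> simp

end LTG

namespace LTG2
open LTG

variable {nA nB : ℕ}

/-- Frobenius norm squared of `TT`. -/
def gT {nA nB : ℕ} (Ψ : QState nA nB) : ℝ :=
  ∑ a, ∑ a', Complex.normSq (TT Ψ a a')

lemma gT_nonneg (Ψ : QState nA nB) : 0 ≤ gT Ψ :=
  Finset.sum_nonneg fun _ _ => Finset.sum_nonneg fun _ _ => Complex.normSq_nonneg _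

lemma parseval1R {I K : Type*} [Fintype I] [Fintype K] (β : I → I → ℂ)
    (hcomp : ∀ a c, ∑ i, β i a * (starRingEnd ℂ) (β i c) = if a = c then 1 else 0)
    (w : I → K → ℂ) :
    ∑ i, ∑ k, Complex.normSq (∑ a, β i a * w a k) = ∑ a, ∑ k, Complex.normSq (w a k) := by
  have h := parseval1C β hcomp w
  simp only [Complex.mul_conj] at h
  exact_mod_cast h

lemma parseval2R {I : Type*} [Fintype I] (β : I → I → ℂ)
    (hcomp : ∀ a c, ∑ i, β i a * (starRingEnd ℂ) (β i c) = if a = c then 1 else 0)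
    (T : I → I → ℂ) :
    ∑ i, ∑ j, Complex.normSq (∑ a, ∑ a', β i a * β j a' * T a a')
      = ∑ a, ∑ a', Complex.normSq (T a a') := by
  have hQ : ∀ i j, (∑ a, ∑ a', β i a * β j a' * T a a')
      = ∑ a', β j a' * (∑ a, β i a * T a a') := by
    intro i j
    rw [Finset.sum_comm]
    refine Finset.sum_congr rfl fun a' _ => ?_
    rw [Finset.mul_sum]
    exact Finset.sum_congr rfl fun a _ => by ring
  simp only [hQ]
  rw [Finset.sum_comm]
  rw [parseval1R β hcomp (fun a' i => ∑ a, β i a * T a a')]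
  rw [Finset.sum_comm]
  rw [parseval1R β hcomp (fun a a' => T a a')]

lemma card_qvec (n : ℕ) : Fintype.card (Fin n → Bool) = 2 ^ n := by
  simp [Fintype.card_fun]

lemma tauBar_le {β : (Fin nA → Bool) → QVec nA} (hβ : ONB β) (Ψ : QState nA nB) :
    tauBar β Ψ ≤ Real.sqrt ((2 ^ nA : ℝ) * gT Ψ) := by
  classical
  set Q : (Fin nA → Bool) → (Fin nA → Bool) → ℂ :=
    fun i j => ∑ a, ∑ a', β i a * β j a' * TT Ψ a a' with hQdef
  have htau : tauBar β Ψ = ∑ i, ‖Q i i‖ := by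
    unfold tauBar
    exact Finset.sum_congr rfl fun i _ => Fv_eq (β i) Ψ
  have hsq : (∑ i, ‖Q i i‖) ^ 2
      ≤ (2 ^ nA : ℝ) * ∑ i, ‖Q i i‖ ^ 2 := by
    have := sq_sum_le_card_mul_sum_sq (s := (Finset.univ : Finset (Fin nA → Bool)))
      (f := fun i => ‖Q i i‖)
    simpa [Finset.card_univ, card_qvec nA] using this
  have hdiag : ∑ i, ‖Q i i‖ ^ 2 ≤ gT Ψ := by
    have h1 : ∀ i : Fin nA → Bool, ‖Q i i‖ ^ 2 ≤ ∑ j, Complex.normSq (Q i j) := by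
      intro i
      rw [Complex.sq_norm]
      exact Finset.single_le_sum (f := fun j => Complex.normSq (Q i j))
        (fun j _ => Complex.normSq_nonneg _) (Finset.mem_univ i)
    calc ∑ i, ‖Q i i‖ ^ 2 ≤ ∑ i, ∑ j, Complex.normSq (Q i j) :=
          Finset.sum_le_sum fun i _ => h1 i
      _ = gT Ψ := by
          refine parseval2R β (fun a c => ?_) (TT Ψ)
          rw [ONB.complete hβ a c]
          congr 1
  have hnn : 0 ≤ ∑ i, ‖Q i i‖ :=
    Finset.sum_nonneg fun _ _ => norm_nonneg _
  rw [htau]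
  have h2 : (∑ i, ‖Q i i‖) ^ 2 ≤ (2 ^ nA : ℝ) * gT Ψ :=
    le_trans hsq (by
      have : (0:ℝ) ≤ (2 ^ nA : ℝ) := by positivity
      nlinarith [hdiag])
  calc (∑ i, ‖Q i i‖) = Real.sqrt ((∑ i, ‖Q i i‖) ^ 2) :=
        (Real.sqrt_sq hnn).symm
    _ ≤ Real.sqrt ((2 ^ nA : ℝ) * gT Ψ) := Real.sqrt_le_sqrt h2

lemma LtauGlobal_le (Ψ : QState nA nB) :
    LtauGlobal Ψ ≤ Real.sqrt ((2 ^ nA : ℝ) * gT Ψ) := by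
  apply Real.sSup_le
  · rintro t ⟨β, hβ, rfl⟩
    exact tauBar_le hβ Ψ
  · exact Real.sqrt_nonneg _

end LTG2

namespace LTG3
open LTG LTG2

variable {nA nB : ℕ}

abbrev XX (nA nB : ℕ) := (Fin nA → Bool) × (Fin nB → Bool)

lemma qInner_self_re {I : Type*} [Fintype I] (ψ : I → ℂ) :
    (qInner ψ ψ).re = ∑ x, Complex.normSq (ψ x) := by
  unfold qInner
  rw [Complex.re_sum]
  refine Finset.sum_congr rfl fun x _ => ?_
  rw [mul_comm, Complex.mul_conj]
  simp

lemma sum_normSq_eq_one {I : Type*} [Fintype I] {ψ : I → ℂ} (h : qNorm ψ = 1) :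
    ∑ x, Complex.normSq (ψ x) = 1 := by
  have h0 : 0 ≤ ∑ x, Complex.normSq (ψ x) :=
    Finset.sum_nonneg fun _ _ => Complex.normSq_nonneg _
  have := h
  unfold qNorm at this
  rw [qInner_self_re] at this
  nlinarith [Real.sq_sqrt h0, Real.sqrt_nonneg (∑ x, Complex.normSq (ψ x))]

lemma normSq_le_one_of_sphere {I : Type*} [Fintype I] {ψ : I → ℂ} (h : qNorm ψ = 1) (x : I) :
    Complex.normSq (ψ x) ≤ 1 := by
  rw [← sum_normSq_eq_one h]
  exact Finset.single_le_sum (fun y _ => Complex.normSq_nonneg (ψ y)) (Finset.mem_univ x)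

lemma continuous_qNorm {I : Type*} [Fintype I] : Continuous (fun ψ : I → ℂ => qNorm ψ) := by
  have : (fun ψ : I → ℂ => qNorm ψ)
      = fun ψ => Real.sqrt (∑ x, Complex.normSq (ψ x)) := by
    funext ψ; unfold qNorm; rw [qInner_self_re]
  rw [this]
  exact Real.continuous_sqrt.comp (continuous_finset_sum _ fun x _ =>
    Complex.continuous_normSq.comp (continuous_apply x))

variable {μ : Measure (QState nA nB)}

lemma measurableSet_sphere : MeasurableSet {Ψ : QState nA nB | qNorm Ψ = 1} :=
  continuous_qNorm.measurable (measurableSet_singleton (1:ℝ))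

lemma ae_sphere (hμ : IsHaarUniform μ) : ∀ᵐ Ψ ∂μ, qNorm Ψ = 1 := by
  have : IsProbabilityMeasure μ := hμ.1
  rw [ae_iff]
  have : {Ψ : QState nA nB | ¬ qNorm Ψ = 1} = {Ψ : QState nA nB | qNorm Ψ = 1}ᶜ := rfl
  rw [this, prob_compl_eq_zero_iff measurableSet_sphere]
  exact hμ.2.1

lemma integrable_of_sphere_bound (hμ : IsHaarUniform μ) {E : Type*} [NormedAddCommGroup E]
    {f : QState nA nB → E} (hf : AEStronglyMeasurable f μ) (C : ℝ)
    (h : ∀ Ψ, qNorm Ψ = 1 → ‖f Ψ‖ ≤ C) : Integrable f μ := by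
  have : IsProbabilityMeasure μ := hμ.1
  refine Integrable.mono' (integrable_const C) hf ?_
  filter_upwards [ae_sphere hμ] with Ψ hΨ
  exact h Ψ hΨ

lemma integral_comp_unitary (hμ : IsHaarUniform μ) {E : Type*} [NormedAddCommGroup E]
    [NormedSpace ℝ E] (U : QState nA nB →ₗ[ℂ] QState nA nB)
    (hU : ∀ ψ φ, qInner (U ψ) (U φ) = qInner ψ φ)
    {f : QState nA nB → E} (hf : AEStronglyMeasurable f μ) :
    ∫ Ψ, f (U Ψ) ∂μ = ∫ Ψ, f Ψ ∂μ := by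
  have hmap := hμ.2.2 U hU
  have hUc : Continuous U := U.continuous_of_finiteDimensional
  calc ∫ Ψ, f (U Ψ) ∂μ = ∫ Ψ, f Ψ ∂(μ.map U) :=
        (MeasureTheory.integral_map hUc.measurable.aemeasurable (by rw [hmap]; exact hf)).symm
    _ = ∫ Ψ, f Ψ ∂μ := by rw [hmap]

/-- The diagonal unitary multiplying coordinate `u` by `I`. -/
def phaseU (u : XX nA nB) : QState nA nB →ₗ[ℂ] QState nA nB where
  toFun Ψ := fun x => (if x = u then Complex.I else 1) * Ψ x
  map_add' Ψ φ := by funext x; simp only [Pi.add_apply]; split <;> ring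
  map_smul' c Ψ := by
    funext x; simp only [Pi.smul_apply, smul_eq_mul, RingHom.id_apply]; split <;> ring

lemma phaseU_qInner (u : XX nA nB) (ψ φ : QState nA nB) :
    qInner (phaseU u ψ) (phaseU u φ) = qInner ψ φ := by
  unfold qInner phaseU
  refine Finset.sum_congr rfl fun x _ => ?_
  simp only [LinearMap.coe_mk, AddHom.coe_mk]
  by_cases hx : x = u
  · rw [if_pos hx]
    calc (starRingEnd ℂ) (Complex.I * ψ x) * (Complex.I * φ x)
        = ((starRingEnd ℂ) Complex.I * Complex.I) * ((starRingEnd ℂ) (ψ x) * φ x) := by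
          rw [map_mul]; ring
      _ = (starRingEnd ℂ) (ψ x) * φ x := by
          rw [Complex.conj_I, neg_mul, Complex.I_mul_I]; ring
  · rw [if_neg hx, one_mul, one_mul]

/-- The permutation unitary `Ψ ↦ Ψ ∘ e`. -/
def permU (e : Equiv.Perm (XX nA nB)) : QState nA nB →ₗ[ℂ] QState nA nB where
  toFun Ψ := fun x => Ψ (e x)
  map_add' Ψ φ := rfl
  map_smul' c Ψ := rfl

lemma permU_qInner (e : Equiv.Perm (XX nA nB)) (ψ φ : QState nA nB) :
    qInner (permU e ψ) (permU e φ) = qInner ψ φ := by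
  unfold qInner permU
  simp only [LinearMap.coe_mk, AddHom.coe_mk]
  exact Fintype.sum_equiv e _ _ fun x => rfl

/-- The monomial `conj Ψ_x · conj Ψ_y · Ψ_z · Ψ_w`. -/
def mono (x y z w : XX nA nB) (Ψ : QState nA nB) : ℂ :=
  (starRingEnd ℂ) (Ψ x) * (starRingEnd ℂ) (Ψ y) * Ψ z * Ψ w

lemma continuous_mono (x y z w : XX nA nB) : Continuous (mono x y z w) := by
  unfold mono
  have h : ∀ t : XX nA nB, Continuous fun Ψ : QState nA nB => (starRingEnd ℂ) (Ψ t) :=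
    fun t => Complex.continuous_conj.comp (continuous_apply t)
  exact (((h x).mul (h y)).mul (continuous_apply z)).mul (continuous_apply w)

lemma norm_mono_le_one {x y z w : XX nA nB} {Ψ : QState nA nB} (h : qNorm Ψ = 1) :
    ‖mono x y z w Ψ‖ ≤ 1 := by
  have hb : ∀ t : XX nA nB, ‖Ψ t‖ ≤ 1 := by
    intro t
    have h1 := normSq_le_one_of_sphere h t
    have h2 : ‖Ψ t‖ ^ 2 ≤ 1 := by rw [Complex.sq_norm]; exact h1
    nlinarith [norm_nonneg (Ψ t)]
  unfold mono
  calc ‖(starRingEnd ℂ) (Ψ x) * (starRingEnd ℂ) (Ψ y) * Ψ z * Ψ w‖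
      = ‖Ψ x‖ * ‖Ψ y‖ * ‖Ψ z‖ * ‖Ψ w‖ := by
        simp [norm_mul]
    _ ≤ 1 := by
        have hxy : ‖Ψ x‖ * ‖Ψ y‖ ≤ 1 := mul_le_one₀ (hb x) (norm_nonneg _) (hb y)
        have hxyz : ‖Ψ x‖ * ‖Ψ y‖ * ‖Ψ z‖ ≤ 1 :=
          mul_le_one₀ hxy (norm_nonneg _) (hb z)
        exact mul_le_one₀ hxyz (norm_nonneg _) (hb w)

lemma integrable_mono (hμ : IsHaarUniform μ) (x y z w : XX nA nB) :
    Integrable (mono x y z w) μ :=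
  integrable_of_sphere_bound hμ (continuous_mono x y z w).aestronglyMeasurable 1
    fun _ h => norm_mono_le_one h

/-- Vanishing of off-pattern monomials. -/
lemma integral_mono_eq_zero (hμ : IsHaarUniform μ) {x y z w : XX nA nB}
    (hzx : z ≠ x) (hzy : z ≠ y) :
    ∫ Ψ, mono x y z w Ψ ∂μ = 0 := by
  set ζ : ℂ := Complex.I * (if w = z then Complex.I else 1) with hζ
  have key : ∀ Ψ, mono x y z w (phaseU z Ψ) = ζ * mono x y z w Ψ := by
    intro Ψ
    unfold mono phaseU
    simp only [LinearMap.coe_mk, AddHom.coe_mk]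
    rw [if_neg (Ne.symm hzx), if_neg (Ne.symm hzy)]
    simp only [eq_self_iff_true, if_true, one_mul]
    by_cases hw : w = z
    · rw [if_pos hw, hζ, if_pos hw]
      ring
    · rw [if_neg hw, hζ, if_neg hw, mul_one, one_mul]
      ring
  have h1 : ∫ Ψ, mono x y z w (phaseU z Ψ) ∂μ = ∫ Ψ, mono x y z w Ψ ∂μ :=
    integral_comp_unitary hμ (phaseU z) (phaseU_qInner z)
      (continuous_mono x y z w).aestronglyMeasurable
  have h2 : ∫ Ψ, mono x y z w (phaseU z Ψ) ∂μ = ζ * ∫ Ψ, mono x y z w Ψ ∂μ := by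
    simp only [key]
    rw [← smul_eq_mul, ← integral_smul]
    simp [smul_eq_mul]
  have hζ1 : ζ ≠ 1 := by
    rw [hζ]
    by_cases hw : w = z
    · rw [if_pos hw, Complex.I_mul_I]
      norm_num
    · rw [if_neg hw, mul_one]
      exact fun h => by simpa using congrArg Complex.im h
  have heq : ζ * ∫ Ψ, mono x y z w Ψ ∂μ = ∫ Ψ, mono x y z w Ψ ∂μ := h2.symm.trans h1
  have h4 : (ζ - 1) * ∫ Ψ, mono x y z w Ψ ∂μ = 0 := by
    rw [sub_mul, one_mul, heq, sub_self]
  exact (mul_eq_zero.mp h4).resolve_left (sub_ne_zero.mpr hζ1)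

/-- The pair function `|Ψ_x|² |Ψ_y|²`. -/
def pairF (x y : XX nA nB) (Ψ : QState nA nB) : ℝ :=
  Complex.normSq (Ψ x) * Complex.normSq (Ψ y)

lemma continuous_pairF (x y : XX nA nB) : Continuous (pairF x y) :=
  (Complex.continuous_normSq.comp (continuous_apply x)).mul
    (Complex.continuous_normSq.comp (continuous_apply y))

lemma pairF_nonneg (x y : XX nA nB) (Ψ : QState nA nB) : 0 ≤ pairF x y Ψ :=
  mul_nonneg (Complex.normSq_nonneg _) (Complex.normSq_nonneg _)

lemma integrable_pairF (hμ : IsHaarUniform μ) (x y : XX nA nB) :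
    Integrable (pairF x y) μ := by
  refine integrable_of_sphere_bound hμ (continuous_pairF x y).aestronglyMeasurable 1 ?_
  intro Ψ h
  have h1 := normSq_le_one_of_sphere h x
  have h2 := normSq_le_one_of_sphere h y
  have h3 := Complex.normSq_nonneg (Ψ x)
  have h4 := Complex.normSq_nonneg (Ψ y)
  rw [Real.norm_eq_abs, abs_of_nonneg (pairF_nonneg x y Ψ)]
  unfold pairF
  nlinarith

/-- Permutation invariance of pair integrals. -/
lemma exists_perm_pair {α : Type*} [DecidableEq α] {x y x' y' : α}
    (hxy : x ≠ y) (hxy' : x' ≠ y') : ∃ e : Equiv.Perm α, e x' = x ∧ e y' = y := by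
  classical
  set e₁ := Equiv.swap x' x with he₁
  have h1 : e₁ x' = x := Equiv.swap_apply_left _ _
  set y'' := e₁ y' with hy''
  have hyx : y'' ≠ x := by
    rw [hy'', ← h1]
    exact fun h => hxy' (e₁.injective h).symm
  refine ⟨e₁.trans (Equiv.swap y'' y), ?_, ?_⟩
  · rw [Equiv.trans_apply, h1]
    exact Equiv.swap_apply_of_ne_of_ne (Ne.symm hyx) hxy
  · rw [Equiv.trans_apply, ← hy'']
    exact Equiv.swap_apply_left _ _

lemma integral_pairF_eq (hμ : IsHaarUniform μ) {x y x' y' : XX nA nB}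
    (hxy : x ≠ y) (hxy' : x' ≠ y') :
    ∫ Ψ, pairF x' y' Ψ ∂μ = ∫ Ψ, pairF x y Ψ ∂μ := by
  obtain ⟨e, hex, hey⟩ := exists_perm_pair hxy hxy'
  have h := integral_comp_unitary hμ (permU e) (permU_qInner e)
    (f := pairF x' y') (continuous_pairF x' y').aestronglyMeasurable
  have hcomp : ∀ Ψ, pairF x' y' (permU e Ψ) = pairF x y Ψ := by
    intro Ψ
    unfold pairF permU
    simp only [LinearMap.coe_mk, AddHom.coe_mk, hex, hey]
  rw [← h]
  exact integral_congr_ae (Filter.Eventually.of_forall fun Ψ => hcomp Ψ)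

end LTG3

namespace LTG4
open LTG LTG2 LTG3

variable {nA nB : ℕ} {μ : Measure (QState nA nB)}

/-- Uniform bound on off-diagonal pair integrals. -/
lemma pair_bound (hμ : IsHaarUniform μ) (hcard : 2 ≤ Fintype.card (XX nA nB))
    {x y : XX nA nB} (hxy : x ≠ y) :
    ∫ Ψ, pairF x y Ψ ∂μ
      ≤ 1 / ((Fintype.card (XX nA nB) : ℝ) * ((Fintype.card (XX nA nB) : ℝ) - 1)) := by
  classical
  have hprob : IsProbabilityMeasure μ := hμ.1
  set D := Fintype.card (XX nA nB) with hD
  set c := ∫ Ψ, pairF x y Ψ ∂μ with hc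
  have hsum1 : ∑ p ∈ (Finset.univ : Finset (XX nA nB × XX nA nB)).filter (fun p => p.1 ≠ p.2),
      ∫ Ψ, pairF p.1 p.2 Ψ ∂μ ≤ 1 := by
    rw [← integral_finset_sum _ (fun p _ => integrable_pairF hμ p.1 p.2)]
    have hle : ∀ᵐ Ψ ∂μ,
        (∑ p ∈ (Finset.univ : Finset (XX nA nB × XX nA nB)).filter (fun p => p.1 ≠ p.2),
          pairF p.1 p.2 Ψ) ≤ (1:ℝ) := by
      filter_upwards [ae_sphere hμ] with Ψ hΨ
      have h1 : ∑ p ∈ (Finset.univ : Finset (XX nA nB × XX nA nB)).filter (fun p => p.1 ≠ p.2),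
          pairF p.1 p.2 Ψ ≤ ∑ p : XX nA nB × XX nA nB, pairF p.1 p.2 Ψ :=
        Finset.sum_le_sum_of_subset_of_nonneg (Finset.filter_subset _ _)
          (fun p _ _ => pairF_nonneg p.1 p.2 Ψ)
      have h2 : ∑ p : XX nA nB × XX nA nB, pairF p.1 p.2 Ψ = 1 := by
        rw [Fintype.sum_prod_type]
        have : ∀ u : XX nA nB, ∑ v, pairF u v Ψ = Complex.normSq (Ψ u) := by
          intro u
          unfold pairF
          rw [← Finset.mul_sum, sum_normSq_eq_one hΨ, mul_one]
        simp only [this]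
        exact sum_normSq_eq_one hΨ
      linarith
    calc ∫ Ψ, (∑ p ∈ (Finset.univ : Finset (XX nA nB × XX nA nB)).filter (fun p => p.1 ≠ p.2),
            pairF p.1 p.2 Ψ) ∂μ
        ≤ ∫ _Ψ, (1:ℝ) ∂μ := by
          refine integral_mono_ae ?_ (integrable_const 1) hle
          exact integrable_finset_sum _ (fun p _ => integrable_pairF hμ p.1 p.2)
      _ = 1 := by simp
  have hconst : ∀ p ∈ (Finset.univ : Finset (XX nA nB × XX nA nB)).filter (fun p => p.1 ≠ p.2),
      ∫ Ψ, pairF p.1 p.2 Ψ ∂μ = c := by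
    intro p hp
    have hne : p.1 ≠ p.2 := (Finset.mem_filter.mp hp).2
    exact integral_pairF_eq hμ hxy hne
  rw [Finset.sum_congr rfl hconst, Finset.sum_const] at hsum1
  have hcardf : ((Finset.univ : Finset (XX nA nB × XX nA nB)).filter
      (fun p => p.1 ≠ p.2)).card = D * D - D := by
    have : (Finset.univ : Finset (XX nA nB × XX nA nB)).filter (fun p => p.1 ≠ p.2)
        = (Finset.univ : Finset (XX nA nB)).offDiag := by
      ext p
      simp [Finset.mem_offDiag]
    rw [this, Finset.offDiag_card]
    simp [hD, Finset.card_univ, Fintype.card_prod]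
  rw [hcardf] at hsum1
  have hDD : (1:ℝ) ≤ (D:ℝ) * ((D:ℝ) - 1) := by
    have h2 : (2:ℝ) ≤ (D:ℝ) := by exact_mod_cast hcard
    nlinarith
  have hcast : ((D * D - D : ℕ) : ℝ) = (D:ℝ) * ((D:ℝ) - 1) := by
    have hle : D ≤ D * D := Nat.le_mul_of_pos_left D (by omega)
    push_cast [Nat.cast_sub hle]
    ring
  have hfinal : (D:ℝ) * ((D:ℝ) - 1) * c ≤ 1 := by
    have := hsum1
    rw [nsmul_eq_mul, hcast] at this
    linarith
  have hcpos : 0 ≤ c := integral_nonneg (fun Ψ => pairF_nonneg x y Ψ)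
  rw [le_div_iff₀ (by linarith)]
  linarith


/-- Pointwise negation of a bitstring. -/
def negB {nB : ℕ} (b : Fin nB → Bool) : Fin nB → Bool := fun k => !(b k)

lemma negB_ne (hnB : 1 ≤ nB) (b : Fin nB → Bool) : negB b ≠ b := by
  intro h
  have := congrFun h ⟨0, hnB⟩
  simp [negB] at this

lemma negB_negB (b : Fin nB → Bool) : negB (negB b) = b := by
  funext k; simp [negB]

lemma MM_eq_zero {b b' : Fin nB → Bool} (h : b' ≠ negB b) : MM b b' = 0 := by
  have : ∃ k, b' k = b k := by
    by_contra hall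
    push_neg at hall
    apply h
    funext k
    have := hall k
    unfold negB
    cases hbk : b k <;> cases hbk' : b' k <;> simp_all
  obtain ⟨k, hk⟩ := this
  unfold MM
  refine Finset.prod_eq_zero (Finset.mem_univ k) ?_
  unfold sigmaY
  rw [hk, if_pos rfl]

lemma abs_MM_negB (b : Fin nB → Bool) : ‖MM b (negB b)‖ = 1 := by
  unfold MM
  rw [norm_prod]
  refine Finset.prod_eq_one fun k _ => ?_
  unfold sigmaY negB
  cases b k <;> simp

lemma TT_collapsed (Ψ : QState nA nB) (a a' : Fin nA → Bool) :
    TT Ψ a a' = ∑ b, MM b (negB b) * (starRingEnd ℂ) (Ψ (a, b))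
      * (starRingEnd ℂ) (Ψ (a', negB b)) := by
  unfold TT
  refine Finset.sum_congr rfl fun b _ => ?_
  rw [Finset.sum_eq_single (negB b)]
  · intro b' _ hb'
    rw [MM_eq_zero hb', zero_mul, zero_mul]
  · intro h; exact absurd (Finset.mem_univ _) h

lemma continuous_TT (a a' : Fin nA → Bool) :
    Continuous (fun Ψ : QState nA nB => TT Ψ a a') := by
  unfold TT
  refine continuous_finset_sum _ fun b _ => continuous_finset_sum _ fun b' _ => ?_
  exact (continuous_const.mul ((Complex.continuous_conj).comp
    (continuous_apply _))).mul ((Complex.continuous_conj).comp (continuous_apply _))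

/-- The key moment bound for a single entry of `TT`. -/
lemma integral_normSq_TT_le (hμ : IsHaarUniform μ) (hnB : 1 ≤ nB)
    (hcard : 2 ≤ Fintype.card (XX nA nB)) (a a' : Fin nA → Bool) :
    ∫ Ψ, Complex.normSq (TT Ψ a a') ∂μ
      ≤ 2 * (2:ℝ) ^ nB
        / ((Fintype.card (XX nA nB) : ℝ) * ((Fintype.card (XX nA nB) : ℝ) - 1)) := by
  classical
  set Ab : ℝ := 1 / ((Fintype.card (XX nA nB) : ℝ) * ((Fintype.card (XX nA nB) : ℝ) - 1))
    with hAb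
  have hAbnn : 0 ≤ Ab := by
    rw [hAb]
    have h2 : (2:ℝ) ≤ (Fintype.card (XX nA nB) : ℝ) := by exact_mod_cast hcard
    exact one_div_nonneg.mpr (by nlinarith)
  -- the complex-valued integrand
  have hF : ∀ Ψ : QState nA nB, ((Complex.normSq (TT Ψ a a') : ℝ) : ℂ)
      = ∑ b, ∑ b', (MM b (negB b) * (starRingEnd ℂ) (MM b' (negB b')))
          * mono (a, b) (a', negB b) (a, b') (a', negB b') Ψ := by
    intro Ψ
    rw [← Complex.mul_conj (TT Ψ a a')]
    rw [TT_collapsed Ψ a a', map_sum, Finset.sum_mul_sum]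
    refine Finset.sum_congr rfl fun b _ => Finset.sum_congr rfl fun b' _ => ?_
    simp only [map_mul, Complex.conj_conj, mono]
    ring
  -- integrate term by term
  have hint : ((∫ Ψ, Complex.normSq (TT Ψ a a') ∂μ : ℝ) : ℂ)
      = ∑ b, ∑ b', (MM b (negB b) * (starRingEnd ℂ) (MM b' (negB b')))
          * ∫ Ψ, mono (a, b) (a', negB b) (a, b') (a', negB b') Ψ ∂μ := by
    rw [show ((∫ Ψ, Complex.normSq (TT Ψ a a') ∂μ : ℝ) : ℂ)
        = ∫ Ψ, ((Complex.normSq (TT Ψ a a') : ℝ) : ℂ) ∂μ from integral_ofReal.symm]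
    simp only [hF]
    rw [integral_finset_sum _ (fun b _ => integrable_finset_sum _ (fun b' _ =>
      ((integrable_mono hμ _ _ _ _).const_mul _)))]
    refine Finset.sum_congr rfl fun b _ => ?_
    rw [integral_finset_sum _ (fun b' _ => ((integrable_mono hμ _ _ _ _).const_mul _))]
    refine Finset.sum_congr rfl fun b' _ => ?_
    exact integral_const_mul _ _
  -- per-term bound
  have hterm : ∀ b b' : Fin nB → Bool,
      ‖(MM b (negB b) * (starRingEnd ℂ) (MM b' (negB b')))
          * ∫ Ψ, mono (a, b) (a', negB b) (a, b') (a', negB b') Ψ ∂μ‖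
        ≤ (if b' = b then Ab else 0) + (if b' = negB b then Ab else 0) := by
    intro b b'
    have hcoeff : ‖MM b (negB b) * (starRingEnd ℂ) (MM b' (negB b'))‖ = 1 := by
      rw [norm_mul]
      simp only [Complex.norm_conj]
      rw [abs_MM_negB, abs_MM_negB, mul_one]
    rw [norm_mul, hcoeff, one_mul]
    by_cases hbb : b' = b
    · -- the pair term
      subst hbb
      have hmono : ∀ Ψ : QState nA nB,
          mono (a, b') (a', negB b') (a, b') (a', negB b') Ψ
            = ((pairF (a, b') (a', negB b') Ψ : ℝ) : ℂ) := by
        intro Ψ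
        unfold mono pairF
        push_cast
        rw [← Complex.mul_conj, ← Complex.mul_conj]
        ring
      rw [if_pos rfl]
      have : ∫ Ψ, mono (a, b') (a', negB b') (a, b') (a', negB b') Ψ ∂μ
          = ((∫ Ψ, pairF (a, b') (a', negB b') Ψ ∂μ : ℝ) : ℂ) := by
        simp only [hmono]
        exact integral_ofReal
      rw [this]
      have hxy : (a, b') ≠ (a', negB b') := by
        intro h
        exact negB_ne hnB b' (congrArg Prod.snd h).symm
      have hpb := pair_bound hμ hcard hxy
      have hpn : 0 ≤ ∫ Ψ, pairF (a, b') (a', negB b') Ψ ∂μ :=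
        integral_nonneg fun Ψ => pairF_nonneg _ _ Ψ
      rw [Complex.norm_real, Real.norm_eq_abs, abs_of_nonneg hpn]
      calc ∫ Ψ, pairF (a, b') (a', negB b') Ψ ∂μ ≤ Ab := hpb
        _ ≤ Ab + (if b' = negB b' then Ab else 0) := by
            split <;> simp [hAbnn]
    · by_cases hbn : b' = negB b
      · -- possible pair term when a = a'
        subst hbn
        by_cases haa : a = a'
        · subst haa
          have hmono : ∀ Ψ : QState nA nB,
              mono (a, b) (a, negB b) (a, negB b) (a, negB (negB b)) Ψ
                = ((pairF (a, b) (a, negB b) Ψ : ℝ) : ℂ) := by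
            intro Ψ
            unfold mono pairF
            rw [negB_negB]
            push_cast
            rw [← Complex.mul_conj, ← Complex.mul_conj]
            ring
          have : ∫ Ψ, mono (a, b) (a, negB b) (a, negB b) (a, negB (negB b)) Ψ ∂μ
              = ((∫ Ψ, pairF (a, b) (a, negB b) Ψ ∂μ : ℝ) : ℂ) := by
            simp only [hmono]
            exact integral_ofReal
          rw [this]
          have hxy : (a, b) ≠ ((a : Fin nA → Bool), negB b) := by
            intro h
            exact negB_ne hnB b (congrArg Prod.snd h).symm
          have hpb := pair_bound hμ hcard hxy
          have hpn : 0 ≤ ∫ Ψ, pairF (a, b) (a, negB b) Ψ ∂μ :=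
            integral_nonneg fun Ψ => pairF_nonneg _ _ Ψ
          rw [Complex.norm_real, Real.norm_eq_abs, abs_of_nonneg hpn]
          rw [if_neg hbb, if_pos rfl, zero_add]
          exact hpb
        · -- vanishing
          have hz : ((a : Fin nA → Bool), negB b) ≠ (a, b) := by
            intro h
            exact negB_ne hnB b (congrArg Prod.snd h)
          have hzy : ((a : Fin nA → Bool), negB b) ≠ (a', negB b) := by
            intro h
            exact haa (congrArg Prod.fst h)
          rw [integral_mono_eq_zero hμ hz hzy]
          rw [if_neg hbb, if_pos rfl, zero_add]
          simpa using hAbnn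
      · -- vanishing
        have hz : ((a : Fin nA → Bool), b') ≠ (a, b) := by
          intro h
          exact hbb (congrArg Prod.snd h)
        have hzy : ((a : Fin nA → Bool), b') ≠ (a', negB b) := by
          intro h
          exact hbn (congrArg Prod.snd h)
        rw [integral_mono_eq_zero hμ hz hzy]
        rw [if_neg hbb, if_neg hbn]
        simp
  -- assemble
  have hnorm2 : ‖((∫ Ψ, Complex.normSq (TT Ψ a a') ∂μ : ℝ) : ℂ)‖
      ≤ 2 * (2:ℝ) ^ nB * Ab := by
    rw [hint]
    calc ‖∑ b, ∑ b', (MM b (negB b) * (starRingEnd ℂ) (MM b' (negB b')))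
            * ∫ Ψ, mono (a, b) (a', negB b) (a, b') (a', negB b') Ψ ∂μ‖
        ≤ ∑ b, ‖∑ b', (MM b (negB b) * (starRingEnd ℂ) (MM b' (negB b')))
            * ∫ Ψ, mono (a, b) (a', negB b) (a, b') (a', negB b') Ψ ∂μ‖ :=
          norm_sum_le _ _
      _ ≤ ∑ b : Fin nB → Bool, (2 * Ab) := by
          refine Finset.sum_le_sum fun b _ => ?_
          calc ‖∑ b', (MM b (negB b) * (starRingEnd ℂ) (MM b' (negB b')))
                  * ∫ Ψ, mono (a, b) (a', negB b) (a, b') (a', negB b') Ψ ∂μ‖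
              ≤ ∑ b', ‖(MM b (negB b) * (starRingEnd ℂ) (MM b' (negB b')))
                  * ∫ Ψ, mono (a, b) (a', negB b) (a, b') (a', negB b') Ψ ∂μ‖ :=
                norm_sum_le _ _
            _ ≤ ∑ b', ((if b' = b then Ab else 0) + (if b' = negB b then Ab else 0)) :=
                Finset.sum_le_sum fun b' _ => hterm b b'
            _ = 2 * Ab := by
                rw [Finset.sum_add_distrib, Finset.sum_ite_eq', Finset.sum_ite_eq']
                simp
                ring
      _ = 2 * (2:ℝ) ^ nB * Ab := by
          rw [Finset.sum_const, Finset.card_univ, card_qvec nB, nsmul_eq_mul]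
          push_cast
          ring
  have hreal : ∫ Ψ, Complex.normSq (TT Ψ a a') ∂μ ≤ 2 * (2:ℝ) ^ nB * Ab := by
    have hnn : 0 ≤ ∫ Ψ, Complex.normSq (TT Ψ a a') ∂μ :=
      integral_nonneg fun Ψ => Complex.normSq_nonneg _
    calc ∫ Ψ, Complex.normSq (TT Ψ a a') ∂μ
        = ‖((∫ Ψ, Complex.normSq (TT Ψ a a') ∂μ : ℝ) : ℂ)‖ := by
          rw [Complex.norm_real, Real.norm_eq_abs, abs_of_nonneg hnn]
      _ ≤ 2 * (2:ℝ) ^ nB * Ab := hnorm2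
  calc ∫ Ψ, Complex.normSq (TT Ψ a a') ∂μ ≤ 2 * (2:ℝ) ^ nB * Ab := hreal
    _ = 2 * (2:ℝ) ^ nB
        / ((Fintype.card (XX nA nB) : ℝ) * ((Fintype.card (XX nA nB) : ℝ) - 1)) := by
      rw [hAb]
      ring

end LTG4

namespace LTG5
open LTG LTG2 LTG3 LTG4

variable {nA nB : ℕ} {μ : Measure (QState nA nB)}

lemma continuous_normSq_TT (a a' : Fin nA → Bool) :
    Continuous (fun Ψ : QState nA nB => Complex.normSq (TT Ψ a a')) :=
  Complex.continuous_normSq.comp (continuous_TT a a')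

lemma abs_TT_le (hnB : 1 ≤ nB) {Ψ : QState nA nB} (h : qNorm Ψ = 1)
    (a a' : Fin nA → Bool) : ‖TT Ψ a a'‖ ≤ (2:ℝ) ^ nB := by
  rw [TT_collapsed]
  have hb : ∀ t : XX nA nB, ‖Ψ t‖ ≤ 1 := by
    intro t
    have h1 := normSq_le_one_of_sphere h t
    have h2 : ‖Ψ t‖ ^ 2 ≤ 1 := by rw [Complex.sq_norm]; exact h1
    nlinarith [norm_nonneg (Ψ t)]
  calc ‖∑ b, MM b (negB b) * (starRingEnd ℂ) (Ψ (a, b))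
          * (starRingEnd ℂ) (Ψ (a', negB b))‖
      ≤ ∑ b, ‖MM b (negB b) * (starRingEnd ℂ) (Ψ (a, b))
          * (starRingEnd ℂ) (Ψ (a', negB b))‖ := by
        exact norm_sum_le _ _
    _ ≤ ∑ _b : Fin nB → Bool, (1:ℝ) := by
        refine Finset.sum_le_sum fun b _ => ?_
        rw [norm_mul, norm_mul, abs_MM_negB, one_mul, Complex.norm_conj, Complex.norm_conj]
        exact mul_le_one₀ (hb _) (norm_nonneg _) (hb _)
    _ = (2:ℝ) ^ nB := by
        rw [Finset.sum_const, Finset.card_univ, card_qvec nB, nsmul_eq_mul]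
        push_cast; ring

lemma integrable_normSq_TT (hμ : IsHaarUniform μ) (hnB : 1 ≤ nB) (a a' : Fin nA → Bool) :
    Integrable (fun Ψ : QState nA nB => Complex.normSq (TT Ψ a a')) μ := by
  refine integrable_of_sphere_bound hμ (continuous_normSq_TT a a').aestronglyMeasurable
    (((2:ℝ) ^ nB) ^ 2) fun Ψ h => ?_
  have h1 := abs_TT_le hnB h a a'
  have h2 : Complex.normSq (TT Ψ a a') = ‖TT Ψ a a'‖ ^ 2 :=
    (Complex.sq_norm _).symm
  rw [Real.norm_eq_abs, abs_of_nonneg (Complex.normSq_nonneg _), h2]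
  have := norm_nonneg (TT Ψ a a')
  nlinarith

lemma continuous_gT : Continuous (fun Ψ : QState nA nB => gT Ψ) := by
  unfold gT
  exact continuous_finset_sum _ fun a _ => continuous_finset_sum _ fun a' _ =>
    continuous_normSq_TT a a'

lemma integrable_gT (hμ : IsHaarUniform μ) (hnB : 1 ≤ nB) :
    Integrable (fun Ψ : QState nA nB => gT Ψ) μ := by
  unfold gT
  exact integrable_finset_sum _ fun a _ => integrable_finset_sum _ fun a' _ =>
    integrable_normSq_TT hμ hnB a a'

lemma integral_gT_le (hμ : IsHaarUniform μ) (hnB : 1 ≤ nB)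
    (hcard : 2 ≤ Fintype.card (XX nA nB)) :
    ∫ Ψ, gT Ψ ∂μ ≤ ((2:ℝ) ^ nA) ^ 2 * (2 * (2:ℝ) ^ nB
      / ((Fintype.card (XX nA nB) : ℝ) * ((Fintype.card (XX nA nB) : ℝ) - 1))) := by
  unfold gT
  rw [integral_finset_sum _ (fun a _ => integrable_finset_sum _ fun a' _ =>
    integrable_normSq_TT hμ hnB a a')]
  calc ∑ a : Fin nA → Bool, ∫ Ψ, (∑ a', Complex.normSq (TT Ψ a a')) ∂μ
      = ∑ a : Fin nA → Bool, ∑ a' : Fin nA → Bool, ∫ Ψ, Complex.normSq (TT Ψ a a') ∂μ := by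
        refine Finset.sum_congr rfl fun a _ => ?_
        exact integral_finset_sum _ (fun a' _ => integrable_normSq_TT hμ hnB a a')
    _ ≤ ∑ _a : Fin nA → Bool, ∑ _a' : Fin nA → Bool, (2 * (2:ℝ) ^ nB
          / ((Fintype.card (XX nA nB) : ℝ) * ((Fintype.card (XX nA nB) : ℝ) - 1))) := by
        exact Finset.sum_le_sum fun a _ => Finset.sum_le_sum fun a' _ =>
          integral_normSq_TT_le hμ hnB hcard a a'
    _ = ((2:ℝ) ^ nA) ^ 2 * (2 * (2:ℝ) ^ nB
          / ((Fintype.card (XX nA nB) : ℝ) * ((Fintype.card (XX nA nB) : ℝ) - 1))) := by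
        rw [Finset.sum_const, Finset.sum_const, Finset.card_univ, card_qvec nA,
          nsmul_eq_mul, nsmul_eq_mul]
        push_cast; ring

end LTG5


set_option maxHeartbeats 1000000
open LTG LTG2 LTG3 LTG4 LTG5

theorem ltauGlobal_concentration_asymptotic
    (NA : ℕ) (hNA : 1 ≤ NA) (ε δ : ℝ) (hε : 0 < ε) (hδ : 0 < δ) :
    ∃ N₀ : ℕ, ∀ NB : ℕ, N₀ ≤ NB → Even NB →
      ∀ μ : Measure (QState NA NB), IsHaarUniform μ →
        μ {Ψ | Real.sqrt (2 / ((2 : ℝ) ^ NB + 1)) + ε ≤ LtauGlobal Ψ} ≤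
          ENNReal.ofReal δ := by
  obtain ⟨n, hn⟩ := pow_unbounded_of_one_lt
    (2 * ((2:ℝ)^NA)^2 / (ε^2 * δ)) (one_lt_two (α := ℝ))
  refine ⟨max n 1, fun NB hNB _hEven μ hμ => ?_⟩
  have hnB : 1 ≤ NB := le_trans (le_max_right n 1) hNB
  have hprob : IsProbabilityMeasure μ := hμ.1
  set dA : ℝ := (2:ℝ)^NA with hdAdef
  set dB : ℝ := (2:ℝ)^NB with hdBdef
  have hdA : (2:ℝ) ≤ dA := by
    calc (2:ℝ) = 2^1 := (pow_one 2).symm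
      _ ≤ 2^NA := pow_le_pow_right₀ one_le_two hNA
  have hdB1 : (1:ℝ) ≤ dB := by
    calc (1:ℝ) = 2^0 := by norm_num
      _ ≤ 2^NB := pow_le_pow_right₀ one_le_two (Nat.zero_le NB)
  have hdBn : (2:ℝ)^n ≤ dB :=
    pow_le_pow_right₀ one_le_two (le_trans (le_max_left n 1) hNB)
  have hdApos : (0:ℝ) < dA := by linarith
  have hdBpos : (0:ℝ) < dB := by linarith
  have hcardX : (Fintype.card (XX NA NB) : ℝ) = dA * dB := by
    rw [Fintype.card_prod, card_qvec NA, card_qvec NB]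
    push_cast
    rw [hdAdef, hdBdef]
  have hcard2 : 2 ≤ Fintype.card (XX NA NB) := by
    have : (2:ℝ) ≤ (Fintype.card (XX NA NB) : ℝ) := by
      rw [hcardX]; nlinarith
    exact_mod_cast this
  -- the subset step
  have hsub : {Ψ : QState NA NB | Real.sqrt (2/((2:ℝ)^NB + 1)) + ε ≤ LtauGlobal Ψ}
      ⊆ {Ψ : QState NA NB | ε^2/dA ≤ gT Ψ} := by
    intro Ψ hΨ
    simp only [Set.mem_setOf_eq] at hΨ ⊢
    have h1 : ε ≤ LtauGlobal Ψ :=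
      le_trans (by nlinarith [Real.sqrt_nonneg (2/((2:ℝ)^NB+1))]) hΨ
    have h2 := LtauGlobal_le (nA := NA) (nB := NB) Ψ
    have h3 : ε ≤ Real.sqrt (dA * gT Ψ) := le_trans h1 h2
    have h4 : ε^2 ≤ dA * gT Ψ :=
      (Real.le_sqrt hε.le (mul_nonneg hdApos.le (gT_nonneg Ψ))).mp h3
    rw [div_le_iff₀ hdApos]
    linarith [h4, mul_comm (gT Ψ) dA]
  refine le_trans (measure_mono hsub) ?_
  -- Markov
  have hmark := mul_meas_ge_le_integral_of_nonneg (μ := μ) (f := fun Ψ => gT Ψ)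
    (Filter.Eventually.of_forall fun Ψ => gT_nonneg Ψ) (integrable_gT hμ hnB) (ε^2/dA)
  have hIg := integral_gT_le hμ hnB hcard2
  set Dc : ℝ := (Fintype.card (XX NA NB) : ℝ) with hDc
  have hP : dA*dB*dB ≤ Dc*(Dc-1) := by
    rw [hcardX]
    have h6 : dB + 1 ≤ dA * dB := by
      nlinarith [mul_nonneg (by linarith : (0:ℝ) ≤ dA - 2) (by linarith : (0:ℝ) ≤ dB)]
    nlinarith [mul_nonneg (mul_pos hdApos hdBpos).le
      (by linarith : (0:ℝ) ≤ dA*dB - 1 - dB)]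
  have hPpos : (0:ℝ) < dA*dB*dB := by positivity
  have hIg2 : ∫ Ψ, gT Ψ ∂μ ≤ 2*dA/dB := by
    calc ∫ Ψ, gT Ψ ∂μ ≤ dA^2 * (2 * dB / (Dc * (Dc - 1))) := hIg
      _ ≤ dA^2 * (2 * dB / (dA*dB*dB)) := by
          refine mul_le_mul_of_nonneg_left ?_ (by positivity)
          exact div_le_div_of_nonneg_left (by positivity) hPpos hP
      _ = 2*dA/dB := by
          field_simp
  set t := (μ {Ψ : QState NA NB | ε^2/dA ≤ gT Ψ}).toReal with ht
  have htnn : 0 ≤ t := ENNReal.toReal_nonneg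
  have e1 : ε^2 * t * dB ≤ 2 * dA^2 := by
    have hA : (ε^2/dA) * t ≤ 2*dA/dB := le_trans hmark hIg2
    rw [div_mul_eq_mul_div, div_le_div_iff₀ hdApos hdBpos] at hA
    nlinarith
  have e2 : 2*dA^2 < ε^2*δ*dB := by
    have h5 : 2*dA^2/(ε^2*δ) < dB := lt_of_lt_of_le hn hdBn
    have hpos : (0:ℝ) < ε^2*δ := by positivity
    rw [div_lt_iff₀ hpos] at h5
    nlinarith
  have htδ : t ≤ δ := by nlinarith [mul_pos (pow_pos hε 2) hdBpos]
  calc μ {Ψ : QState NA NB | ε^2/dA ≤ gT Ψ} = ENNReal.ofReal t :=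
        (ENNReal.ofReal_toReal (measure_ne_top μ _)).symm
    _ ≤ ENNReal.ofReal δ := ENNReal.ofReal_le_ofReal htδ
end
end
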